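/- arXiv:1911.10593 — 3 statements merged into one kernel-verified Lean document; each statement's English description precedes it below -/
import Mathlib

section
/- Let n, m ≥ 1 and let y : ℝⁿ → ℝᵐ be a smooth solution of the extended Painlevé PDE which is bounded on the half-space {x ∈ ℝⁿ : x₁ ≥ 1}. Then, with M := e^{2/3}·sup{ |y(x)| : x₁ ≥ 1 }, one has |y(x)| ≤ M·e^{−(2/3)·x₁^{3/2}} for every x with x₁ ≥ 1; in particular |y(x)| = O(e^{−(2/3)x₁^{3/2}}) as x₁ → +∞, uniformly in (x₂,…,xₙ). -/
open MeasureTheory Filter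
open scoped Topology RealInnerProductSpace ContDiff

noncomputable section

/-- `ℝᵏ` with the Euclidean structure. -/
abbrev Euc (k : ℕ) : Type := EuclideanSpace ℝ (Fin k)

/-- Second directional derivative of `f` in the direction `v`. -/
def d2 {V F : Type*} [NormedAddCommGroup V] [NormedSpace ℝ V]
    [NormedAddCommGroup F] [NormedSpace ℝ F] (f : V → F) (v : V) (x : V) : F :=
  fderiv ℝ (fun y => fderiv ℝ f y v) x v

/-- The Laplacian (sum of the second partial derivatives) for maps defined on
`ℝ × ℝᵏ = ℝᵏ⁺¹`, where the first coordinate plays the role of `x₁`. -/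
def lap {k : ℕ} {F : Type*} [NormedAddCommGroup F] [NormedSpace ℝ F]
    (f : ℝ × Euc k → F) (x : ℝ × Euc k) : F :=
  d2 f (1, 0) x + ∑ j : Fin k, d2 f (0, EuclideanSpace.single j 1) x

/-- The Laplacian for maps defined on `ℝᵏ`. -/
def lapE {k : ℕ} {F : Type*} [NormedAddCommGroup F] [NormedSpace ℝ F]
    (f : Euc k → F) (x : Euc k) : F :=
  ∑ j : Fin k, d2 f (EuclideanSpace.single j 1) x

/-- The extended Painlevé P.D.E. `Δy = x₁ y + 2|y|² y` (smooth solutions). -/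
def IsPainleve {k : ℕ} {F : Type*} [NormedAddCommGroup F] [NormedSpace ℝ F]
    (y : ℝ × Euc k → F) : Prop :=
  ContDiff ℝ ∞ y ∧ ∀ x : ℝ × Euc k, lap y x = x.1 • y x + (2 * ‖y x‖ ^ 2) • y x

/-- Squared norm of the full gradient, `|∇u|² = ∑ⱼ |∂ⱼu|²`, on `ℝ × ℝᵏ`. -/
def gradSq {k : ℕ} {F : Type*} [NormedAddCommGroup F] [NormedSpace ℝ F]
    (u : ℝ × Euc k → F) (x : ℝ × Euc k) : ℝ :=
  ‖fderiv ℝ u x (1, 0)‖ ^ 2 + ∑ j : Fin k, ‖fderiv ℝ u x (0, EuclideanSpace.single j 1)‖ ^ 2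

/-- Squared norm of the full gradient on `ℝᵏ`. -/
def gradSqE {k : ℕ} {F : Type*} [NormedAddCommGroup F] [NormedSpace ℝ F]
    (u : Euc k → F) (x : Euc k) : ℝ :=
  ∑ j : Fin k, ‖fderiv ℝ u x (EuclideanSpace.single j 1)‖ ^ 2

/-- The Painlevé energy `E_PII(u, Ω) = ∫_Ω (1/2)|∇u|² + (1/2)x₁|u|² + (1/2)|u|⁴`. -/
def EP {k : ℕ} {F : Type*} [NormedAddCommGroup F] [NormedSpace ℝ F]
    (u : ℝ × Euc k → F) (Ω : Set (ℝ × Euc k)) : ℝ :=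
  ∫ x in Ω, ((1 / 2) * gradSq u x + (1 / 2) * x.1 * ‖u x‖ ^ 2 + (1 / 2) * ‖u x‖ ^ 4)

/-- Minimality of a map for the Painlevé energy, with respect to smooth compactly
supported perturbations. -/
def IsMinimal {k : ℕ} {F : Type*} [NormedAddCommGroup F] [NormedSpace ℝ F]
    (y : ℝ × Euc k → F) : Prop :=
  ∀ φ : ℝ × Euc k → F, ContDiff ℝ ∞ φ → HasCompactSupport φ →
    EP y (tsupport φ) ≤ EP (y + φ) (tsupport φ)

/-- The Ginzburg–Landau energy `E_GL(u, Ω) = ∫_Ω (1/2)|∇u|² + (1/4)(|u|²−1)²` on `ℝ × ℝᵏ`. -/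
def EGL {k : ℕ} {F : Type*} [NormedAddCommGroup F] [NormedSpace ℝ F]
    (u : ℝ × Euc k → F) (Ω : Set (ℝ × Euc k)) : ℝ :=
  ∫ x in Ω, ((1 / 2) * gradSq u x + (1 / 4) * (‖u x‖ ^ 2 - 1) ^ 2)

/-- Minimality for the Ginzburg–Landau energy on `ℝ × ℝᵏ`. -/
def IsMinimalGL {k : ℕ} {F : Type*} [NormedAddCommGroup F] [NormedSpace ℝ F]
    (u : ℝ × Euc k → F) : Prop :=
  ∀ φ : ℝ × Euc k → F, ContDiff ℝ ∞ φ → HasCompactSupport φ →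
    EGL u (tsupport φ) ≤ EGL (u + φ) (tsupport φ)

/-- The Ginzburg–Landau energy for maps on `ℝᵏ`. -/
def EGLE {k : ℕ} {F : Type*} [NormedAddCommGroup F] [NormedSpace ℝ F]
    (u : Euc k → F) (Ω : Set (Euc k)) : ℝ :=
  ∫ x in Ω, ((1 / 2) * gradSqE u x + (1 / 4) * (‖u x‖ ^ 2 - 1) ^ 2)

/-- The one-dimensional Painlevé energy. -/
def EP1 {F : Type*} [NormedAddCommGroup F] [NormedSpace ℝ F]
    (u : ℝ → F) (Ω : Set ℝ) : ℝ :=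
  ∫ x in Ω, ((1 / 2) * ‖deriv u x‖ ^ 2 + (1 / 2) * x * ‖u x‖ ^ 2 + (1 / 2) * ‖u x‖ ^ 4)

/-- Minimality for the one-dimensional Painlevé energy. -/
def IsMinimal1 {F : Type*} [NormedAddCommGroup F] [NormedSpace ℝ F] (u : ℝ → F) : Prop :=
  ∀ φ : ℝ → F, ContDiff ℝ ∞ φ → HasCompactSupport φ →
    EP1 u (tsupport φ) ≤ EP1 (u + φ) (tsupport φ)

/-- The Hastings–McLeod solution of the second Painlevé O.D.E. `h'' = x h + 2h³`:
positive, strictly decreasing, tending to `0` at `+∞` and to the branch `√(−x/2)` at `−∞`. -/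
structure IsHastingsMcLeod (h : ℝ → ℝ) : Prop where
  smooth : ContDiff ℝ ∞ h
  ode : ∀ x : ℝ, deriv (deriv h) x = x * h x + 2 * (h x) ^ 3
  pos : ∀ x : ℝ, 0 < h x
  anti : StrictAnti h
  tendsto_atTop : Tendsto h atTop (𝓝 0)
  tendsto_atBot : Tendsto (fun x => h x / Real.sqrt (-x / 2)) atBot (𝓝 1)

/-- `h` is a minimal solution of the second Painlevé O.D.E. -/
def HMMinimal (h : ℝ → ℝ) : Prop := IsMinimal1 h

/-- `h` and `−h` are the only minimal solutions of the second Painlevé O.D.E.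
that are bounded on `[0, ∞)`. -/
def HMUnique (h : ℝ → ℝ) : Prop :=
  ∀ g : ℝ → ℝ, ContDiff ℝ ∞ g → (∀ x : ℝ, deriv (deriv g) x = x * g x + 2 * (g x) ^ 3) →
    IsMinimal1 g → (∃ C : ℝ, ∀ x ≥ (0 : ℝ), |g x| ≤ C) → g = h ∨ g = -h

/-- For every dimension, `x ↦ h(x₁)` is a minimal solution of the scalar extended
Painlevé P.D.E. -/
def HMSliceMinimal (h : ℝ → ℝ) : Prop :=
  ∀ k : ℕ, IsMinimal (fun x : ℝ × Euc k => h x.1)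

/-- Convergence in `C¹_loc`: uniform convergence of the maps and of their first-order
derivatives on every compact set. -/
def TendstoC1Loc {ι V F : Type*} [NormedAddCommGroup V] [NormedSpace ℝ V]
    [NormedAddCommGroup F] [NormedSpace ℝ F]
    (f : ι → V → F) (l : Filter ι) (g : V → F) : Prop :=
  ∀ K : Set V, IsCompact K →
    TendstoUniformlyOn f g l K ∧
      TendstoUniformlyOn (fun i x => fderiv ℝ (f i) x) (fun x => fderiv ℝ g x) l K

/-- The rescaled map
`ỹ(t₁, τ) = √2 (−(3/2)t₁)^{−1/3} y(−(−(3/2)t₁)^{2/3}, z + (−(3/2)t₁)^{−1/3} τ)`. -/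
def resc {k : ℕ} {F : Type*} [NormedAddCommGroup F] [NormedSpace ℝ F]
    (y : ℝ × Euc k → F) (z : Euc k) (t : ℝ × Euc k) : F :=
  (Real.sqrt 2 * (-(3 / 2 : ℝ) * t.1) ^ (-(1 / 3 : ℝ))) •
    y (-((-(3 / 2 : ℝ) * t.1) ^ ((2 : ℝ) / 3)),
      z + ((-(3 / 2 : ℝ) * t.1) ^ (-(1 / 3 : ℝ))) • t.2)

/-- The standing hypotheses on the vortex solution `y : ℝⁿ → ℝⁿ⁻¹` (here `n = k+1`):
smooth solution of the extended Painlevé P.D.E., `O(n−1)`-equivariant in `z` with smooth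
odd radial profile `yrad`, with `y(x₁,z)·z > 0` for `z ≠ 0`, `|y| ≤ h(x₁)`, minimal for
equivariant perturbations and for radial perturbations `χ(x) z/|z|` supported away from
the axis `z = 0`. -/
structure Standing {k : ℕ} (h : ℝ → ℝ) (y : ℝ × Euc k → Euc k)
    (yrad : ℝ → ℝ → ℝ) : Prop where
  smooth : ContDiff ℝ ∞ y
  pde : ∀ x : ℝ × Euc k, lap y x = x.1 • y x + (2 * ‖y x‖ ^ 2) • y x
  equivariant : ∀ (g : Euc k ≃ₗᵢ[ℝ] Euc k) (x₁ : ℝ) (z : Euc k),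
    y (x₁, g z) = g (y (x₁, z))
  yrad_smooth : ContDiff ℝ ∞ (fun p : ℝ × ℝ => yrad p.1 p.2)
  yrad_odd : ∀ x₁ σ : ℝ, yrad x₁ (-σ) = -yrad x₁ σ
  yrad_spec : ∀ (x₁ : ℝ) (z : Euc k), z ≠ 0 → y (x₁, z) = (yrad x₁ ‖z‖ * ‖z‖⁻¹) • z
  inner_pos : ∀ (x₁ : ℝ) (z : Euc k), z ≠ 0 → 0 < ⟪y (x₁, z), z⟫
  bound : ∀ x : ℝ × Euc k, ‖y x‖ ≤ h x.1
  min_equivariant : ∀ φ : ℝ × Euc k → Euc k, ContDiff ℝ ∞ φ → HasCompactSupport φ →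
    (∀ (g : Euc k ≃ₗᵢ[ℝ] Euc k) (x₁ : ℝ) (z : Euc k), φ (x₁, g z) = g (φ (x₁, z))) →
    EP y (tsupport φ) ≤ EP (y + φ) (tsupport φ)
  min_radial : ∀ χ : ℝ × Euc k → ℝ, ContDiff ℝ ∞ χ → HasCompactSupport χ →
    (∀ x ∈ tsupport χ, x.2 ≠ (0 : Euc k)) →
    EP y (tsupport fun x : ℝ × Euc k => (χ x * ‖x.2‖⁻¹) • x.2) ≤
      EP (y + fun x : ℝ × Euc k => (χ x * ‖x.2‖⁻¹) • x.2)
        (tsupport fun x : ℝ × Euc k => (χ x * ‖x.2‖⁻¹) • x.2)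

end

section AuxPf
open Real Filter
open scoped RealInnerProductSpace ContDiff

variable {V F' : Type*} [NormedAddCommGroup V] [NormedSpace ℝ V]
  [NormedAddCommGroup F'] [NormedSpace ℝ F']

lemma hasDerivAt_line (x u : V) (s : ℝ) : HasDerivAt (fun s : ℝ => x + s • u) u s := by
  simpa using ((hasDerivAt_id s).smul_const u).const_add x

lemma lineDeriv1 {f : V → F'} (hf : ContDiff ℝ ∞ f) (x u : V) (s : ℝ) :
    HasDerivAt (fun s : ℝ => f (x + s • u)) (fderiv ℝ f (x + s • u) u) s :=
  ((hf.differentiable (by norm_num)).differentiableAt.hasFDerivAt).comp_hasDerivAt s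
    (hasDerivAt_line x u s)

lemma contDiff_fderiv_apply {f : V → F'} (hf : ContDiff ℝ ∞ f) (u : V) :
    ContDiff ℝ ∞ (fun p => fderiv ℝ f p u) :=
  (hf.fderiv_right (by norm_num)).clm_apply contDiff_const

lemma lineDeriv2 {f : V → F'} (hf : ContDiff ℝ ∞ f) (x u : V) (s : ℝ) :
    HasDerivAt (fun s : ℝ => fderiv ℝ f (x + s • u) u) (d2 f u (x + s • u)) s := by
  have h := ((((contDiff_fderiv_apply hf u).differentiable
      (by norm_num)).differentiableAt).hasFDerivAt).comp_hasDerivAt s (hasDerivAt_line x u s)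
  simpa [d2, Function.comp_def] using h

lemma isLocalMax_line {v : V → ℝ} {x : V} (u : V) (h : IsLocalMax v x) :
    IsLocalMax (fun s : ℝ => v (x + s • u)) 0 := by
  have hc : ContinuousAt (fun s : ℝ => x + s • u) 0 := by fun_prop
  have h2 := hc.tendsto.eventually (by rw [zero_smul, add_zero]; exact h)
  have : IsLocalMax (fun s : ℝ => v (x + s • u)) 0 := by
    filter_upwards [h2] with s hs
    simpa using hs
  exact this

lemma second_deriv_test_max {g g1 : ℝ → ℝ} {c D : ℝ} (hc : 0 < c)
    (hd1 : ∀ s ∈ Set.Ioo (-c) c, HasDerivAt g (g1 s) s)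
    (hd2 : HasDerivAt g1 D 0) (hmax : IsLocalMax g 0) : D ≤ 0 := by
  by_contra hD
  push_neg at hD
  have h0 : g1 0 = 0 := by
    have h := hmax.deriv_eq_zero
    rwa [(hd1 0 ⟨by linarith, hc⟩).deriv] at h
  have hslope : Tendsto (fun s => g1 s / s) (𝓝[≠] 0) (𝓝 D) := by
    have h := hasDerivAt_iff_tendsto_slope.mp hd2
    refine h.congr' ?_
    filter_upwards [self_mem_nhdsWithin] with s hs
    simp [slope_fun_def, h0, div_eq_inv_mul]
  have hpos : ∀ᶠ s in 𝓝[≠] (0:ℝ), 0 < g1 s / s := hslope.eventually (eventually_gt_nhds hD)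
  rw [eventually_nhdsWithin_iff] at hpos
  have hmax' : ∀ᶠ s in 𝓝 (0:ℝ), g s ≤ g 0 := hmax
  obtain ⟨r, hr, hball⟩ := Metric.eventually_nhds_iff.mp (hpos.and hmax')
  set a : ℝ := min (r / 2) (c / 2) with ha
  have ha0 : 0 < a := by positivity
  have har : a < r := lt_of_le_of_lt (min_le_left _ _) (by linarith)
  have hac : a < c := lt_of_le_of_lt (min_le_right _ _) (by linarith)
  have hmono : StrictMonoOn g (Set.Icc 0 a) := by
    apply strictMonoOn_of_deriv_pos (convex_Icc 0 a)
    · intro s hs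
      exact (hd1 s ⟨by linarith [hs.1], lt_of_le_of_lt hs.2 hac⟩).continuousAt.continuousWithinAt
    · intro s hs
      rw [interior_Icc] at hs
      rw [(hd1 s ⟨by linarith [hs.1], by linarith [hs.2]⟩).deriv]
      have hds : dist s 0 < r := by
        rw [Real.dist_eq, sub_zero, abs_of_pos hs.1]; linarith [hs.2]
      have := (hball hds).1 (ne_of_gt hs.1)
      have hgs : 0 < g1 s / s * s := mul_pos this hs.1
      rwa [div_mul_cancel₀ _ (ne_of_gt hs.1)] at hgs
  have hlt : g 0 < g a := hmono (Set.left_mem_Icc.mpr ha0.le) (Set.right_mem_Icc.mpr ha0.le) ha0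
  have hda : dist a 0 < r := by rw [Real.dist_eq, sub_zero, abs_of_pos ha0]; exact har
  exact absurd ((hball hda).2) (not_le.mpr hlt)

lemma rho_line {E' G' : Type*} [NormedAddCommGroup E'] [NormedSpace ℝ E']
    [NormedAddCommGroup G'] [InnerProductSpace ℝ G']
    {y : E' → G'} (hy : ContDiff ℝ ∞ y) {ε : ℝ} (hε : 0 < ε) (x u : E') :
    ∃ g1 D, (∀ s : ℝ, HasDerivAt (fun s : ℝ => Real.sqrt (‖y (x + s • u)‖ ^ 2 + ε ^ 2)) (g1 s) s)
      ∧ HasDerivAt g1 D 0 ∧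
      ⟪y x, d2 y u x⟫ / Real.sqrt (‖y x‖ ^ 2 + ε ^ 2) ≤ D := by
  set Y : ℝ → G' := fun s => y (x + s • u) with hYdef
  set Y1 : ℝ → G' := fun s => fderiv ℝ y (x + s • u) u with hY1def
  have hY : ∀ s, HasDerivAt Y (Y1 s) s := lineDeriv1 hy x u
  have hY1 : HasDerivAt Y1 (d2 y u x) 0 := by
    have := lineDeriv2 hy x u 0
    simpa using this
  set q : ℝ → ℝ := fun s => ‖Y s‖ ^ 2 + ε ^ 2 with hqdef
  have hqpos : ∀ s, 0 < q s := fun s => by positivity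
  have hq : ∀ s, HasDerivAt q (2 * ⟪Y s, Y1 s⟫) s := by
    intro s
    have h1 := ((hY s).inner ℝ (hY s)).add_const (ε ^ 2)
    have h2 : (fun t => ⟪Y t, Y t⟫ + ε ^ 2) = q := by
      funext t; rw [real_inner_self_eq_norm_sq]
    rw [h2] at h1
    refine h1.congr_deriv ?_
    rw [real_inner_comm (Y1 s) (Y s)]; ring
  have hg : ∀ s, HasDerivAt (fun s => Real.sqrt (q s))
      (1 / (2 * Real.sqrt (q s)) * (2 * ⟪Y s, Y1 s⟫)) s := fun s =>
    (Real.hasDerivAt_sqrt (hqpos s).ne').comp s (hq s)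
  set B : ℝ := ⟪Y 0, Y1 0⟫ with hB
  set N : ℝ := ⟪Y1 0, Y1 0⟫ with hN
  set A2 : ℝ := ⟪Y 0, d2 y u x⟫ with hA2
  set r : ℝ := Real.sqrt (q 0) with hrdef
  have hr : 0 < r := Real.sqrt_pos.mpr (hqpos 0)
  have hr2 : r ^ 2 = q 0 := Real.sq_sqrt (hqpos 0).le
  have hsq : ∀ s, HasDerivAt (fun s => 2 * Real.sqrt (q s))
      (2 * (1 / (2 * Real.sqrt (q s)) * (2 * ⟪Y s, Y1 s⟫))) s := fun s => (hg s).const_mul 2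
  have hfrac : HasDerivAt (fun s => 1 / (2 * Real.sqrt (q s)))
      ((0 * (2 * r) - 1 * (2 * (1 / (2 * r) * (2 * B)))) / (2 * r) ^ 2) 0 :=
    (hasDerivAt_const 0 (1:ℝ)).div (hsq 0) (by positivity)
  have hip : HasDerivAt (fun s => 2 * ⟪Y s, Y1 s⟫) (2 * (⟪Y 0, d2 y u x⟫ + ⟪Y1 0, Y1 0⟫)) 0 :=
    ((hY 0).inner ℝ hY1).const_mul 2
  have hD0 := hfrac.mul hip
  set D : ℝ := (0 * (2 * r) - 1 * (2 * (1 / (2 * r) * (2 * B)))) / (2 * r) ^ 2 * (2 * B)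
      + 1 / (2 * r) * (2 * (A2 + N)) with hDdef
  refine ⟨fun s => 1 / (2 * Real.sqrt (q s)) * (2 * ⟪Y s, Y1 s⟫), D, hg, hD0, ?_⟩
  have hDval : D = (A2 + N) / r - B ^ 2 / r ^ 3 := by
    rw [hDdef]; field_simp; ring
  have hY0 : Y 0 = y x := by rw [hYdef]; simp
  have hq0 : q 0 = ‖y x‖ ^ 2 + ε ^ 2 := by simp only [hqdef]; rw [hY0]
  have hNnorm : N = ‖Y1 0‖ ^ 2 := real_inner_self_eq_norm_sq _
  have hCS : B ^ 2 ≤ ‖Y 0‖ ^ 2 * ‖Y1 0‖ ^ 2 := by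
    have h := abs_real_inner_le_norm (Y 0) (Y1 0)
    have h2 : B ^ 2 ≤ (‖Y 0‖ * ‖Y1 0‖) ^ 2 := by
      rw [← sq_abs B]
      exact pow_le_pow_left₀ (abs_nonneg _) h 2
    calc B ^ 2 ≤ (‖Y 0‖ * ‖Y1 0‖) ^ 2 := h2
      _ = ‖Y 0‖ ^ 2 * ‖Y1 0‖ ^ 2 := by ring
  have hkey : B ^ 2 ≤ N * r ^ 2 := by
    have hle : ‖Y 0‖ ^ 2 ≤ r ^ 2 := by
      rw [hr2, hqdef]; simp only []; nlinarith [sq_nonneg ε, hε]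
    nlinarith [hNnorm, norm_nonneg (Y1 0), sq_nonneg (‖Y1 0‖)]
  have h1 : B ^ 2 / r ^ 3 ≤ N / r := by
    rw [div_le_div_iff₀ (by positivity) hr]
    nlinarith [hkey, hr]
  have hA2eq : ⟪y x, d2 y u x⟫ / Real.sqrt (‖y x‖ ^ 2 + ε ^ 2) = A2 / r := by
    rw [hA2, hY0, hrdef, hq0]
  rw [hA2eq, hDval, add_div]
  linarith [h1]

lemma Wline_second {M t : ℝ} (hM : 0 ≤ M) (ht : 1 < t) :
    ∃ g1 D, (∀ s ∈ Set.Ioo (-1:ℝ) 1, HasDerivAt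
        (fun s : ℝ => M * Real.exp (-(2/3) * ((t+s) * Real.sqrt (t+s)))) (g1 s) s)
      ∧ HasDerivAt g1 D 0 ∧ D ≤ t * (M * Real.exp (-(2/3) * (t * Real.sqrt t))) := by
  have ht0 : (0:ℝ) < t := by linarith
  have hmul : ∀ r : ℝ, 0 < r → HasDerivAt (fun r : ℝ => r * Real.sqrt r)
      ((3/2) * Real.sqrt r) r := by
    intro r hr
    have h := (hasDerivAt_id r).mul (Real.hasDerivAt_sqrt hr.ne')
    refine h.congr_deriv ?_
    have h2 : Real.sqrt r * Real.sqrt r = r := Real.mul_self_sqrt hr.le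
    have h3 : (0:ℝ) < Real.sqrt r := Real.sqrt_pos.mpr hr
    simp only [id]
    field_simp
    nlinarith [h2]
  have hline : ∀ s : ℝ, HasDerivAt (fun s : ℝ => t + s) 1 s := fun s =>
    (hasDerivAt_id s).const_add t
  have hchain : ∀ s : ℝ, 0 < t + s → HasDerivAt
      (fun s : ℝ => M * Real.exp (-(2/3) * ((t+s) * Real.sqrt (t+s))))
      ((-M) * (Real.sqrt (t+s) * Real.exp (-(2/3) * ((t+s) * Real.sqrt (t+s))))) s := by
    intro s hs
    have h2 : HasDerivAt (fun s : ℝ => (t+s) * Real.sqrt (t+s))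
        ((3/2) * Real.sqrt (t+s) * 1) s := (hmul _ hs).comp s (hline s)
    have h3 := ((h2.const_mul (-(2/3 : ℝ))).exp).const_mul M
    refine h3.congr_deriv ?_
    ring
  have hne : t + (0:ℝ) ≠ 0 := by simpa using ht0.ne'
  have hS : HasDerivAt (fun s : ℝ => Real.sqrt (t + s)) (1 / (2 * Real.sqrt (t+0)) * 1) 0 :=
    (Real.hasDerivAt_sqrt hne).comp 0 (hline 0)
  have hP : HasDerivAt (fun s : ℝ => (t + s) * Real.sqrt (t + s))
      (1 * Real.sqrt (t+0) + (t+0) * (1 / (2 * Real.sqrt (t+0)) * 1)) 0 := (hline 0).mul hS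
  have hE : HasDerivAt (fun s : ℝ => Real.exp (-(2/3) * ((t+s) * Real.sqrt (t+s))))
      (Real.exp (-(2/3) * ((t+0) * Real.sqrt (t+0)))
        * (-(2/3) * (1 * Real.sqrt (t+0) + (t+0) * (1 / (2 * Real.sqrt (t+0)) * 1)))) 0 :=
    (hP.const_mul (-(2/3:ℝ))).exp
  have hg1 := (hS.mul hE).const_mul (-M)
  refine ⟨_, _, fun s hs => hchain s (by linarith [hs.1]), hg1, ?_⟩
  simp only [add_zero, mul_one, one_mul]
  have h1 : Real.sqrt t * Real.sqrt t = t := Real.mul_self_sqrt ht0.le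
  have h2 : (0:ℝ) < Real.sqrt t := Real.sqrt_pos.mpr ht0
  set st := Real.sqrt t with hst
  set E := Real.exp (-(2/3) * (t * st)) with hEdef
  have hEpos : 0 < E := Real.exp_pos _
  rw [← h1]
  have h3 : st ≠ 0 := ne_of_gt h2
  have heq : -M * (1 / (2 * st) * E + st * (E * (-(2 / 3) * (st + st * st * (1 / (2 * st))))))
      = st * st * (M * E) - M * E * (1 / (2 * st)) := by
    field_simp
    ring
  rw [heq]
  have h5 : 0 ≤ M * E * (1 / (2 * st)) := by positivity
  linarith

lemma betaline {A t R : ℝ} (hA : 0 ≤ A) (ht : 1 ≤ t) :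
    ∃ g1 D, (∀ s : ℝ, HasDerivAt (fun s : ℝ => A * Real.exp (t + s - R)) (g1 s) s)
      ∧ HasDerivAt g1 D 0 ∧ D ≤ t * (A * Real.exp (t - R)) := by
  have hline : ∀ s : ℝ, HasDerivAt (fun s : ℝ => t + s - R) 1 s := fun s => by
    simpa using (((hasDerivAt_id s).const_add t).sub_const R)
  have h : ∀ s : ℝ, HasDerivAt (fun s : ℝ => A * Real.exp (t + s - R))
      (A * Real.exp (t + s - R)) s := fun s => by
    simpa using ((hline s).exp).const_mul A
  refine ⟨_, _, h, h 0, ?_⟩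
  simp only [add_zero]
  have h6 := mul_nonneg (by linarith : (0:ℝ) ≤ t - 1) (mul_nonneg hA (Real.exp_pos (t-R)).le)
  nlinarith [h6]

lemma zline {G' : Type*} [NormedAddCommGroup G'] [InnerProductSpace ℝ G'] (z e : G') :
    ∃ g1 D, (∀ s : ℝ, HasDerivAt (fun s : ℝ => ‖z + s • e‖ ^ 2) (g1 s) s)
      ∧ HasDerivAt g1 D 0 ∧ D = 2 * ‖e‖ ^ 2 := by
  have hY : ∀ s : ℝ, HasDerivAt (fun s : ℝ => z + s • e) e s := hasDerivAt_line z e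
  have h1 : ∀ s : ℝ, HasDerivAt (fun s : ℝ => ‖z + s • e‖ ^ 2) (2 * ⟪z + s • e, e⟫) s := by
    intro s
    have h := (hY s).inner ℝ (hY s)
    have h2 : (fun s : ℝ => ⟪z + s • e, z + s • e⟫) = (fun s : ℝ => ‖z + s • e‖ ^ 2) := by
      funext t; rw [real_inner_self_eq_norm_sq]
    rw [h2] at h
    refine h.congr_deriv ?_
    rw [real_inner_comm e (z + s • e)]; ring
  have h2 : HasDerivAt (fun s : ℝ => 2 * ⟪z + s • e, e⟫) (2 * ‖e‖ ^ 2) 0 := by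
    have h := ((hY 0).inner ℝ (hasDerivAt_const 0 e)).const_mul 2
    refine h.congr_deriv ?_
    rw [real_inner_self_eq_norm_sq]
    simp
  exact ⟨_, _, h1, h2, rfl⟩

end AuxPf

set_option maxHeartbeats 4000000 in
/-- A solution of the extended Painlevé P.D.E. which is bounded on the
half-space `{x₁ ≥ 1}` satisfies `|y(x)| ≤ M e^{−(2/3) x₁^{3/2}}` there, with
`M = e^{2/3} sup_{x₁ ≥ 1} |y|`. -/
theorem statement2 {k m : ℕ} (hm : 1 ≤ m) (y : ℝ × Euc k → Euc m)
    (hy : IsPainleve y)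
    (hbdd : ∃ C : ℝ, ∀ x : ℝ × Euc k, 1 ≤ x.1 → ‖y x‖ ≤ C) :
    ∀ x : ℝ × Euc k, 1 ≤ x.1 →
      ‖y x‖ ≤ (Real.exp (2 / 3) * sSup ((fun x : ℝ × Euc k => ‖y x‖) '' {x | 1 ≤ x.1})) *
        Real.exp (-(2 / 3) * x.1 ^ ((3 : ℝ) / 2)) := by
  obtain ⟨hsmooth, hpde⟩ := hy
  obtain ⟨C, hC⟩ := hbdd
  intro x₀ hx₀
  classical
  obtain ⟨S, hSdef⟩ : ∃ S : ℝ, S = sSup ((fun x : ℝ × Euc k => ‖y x‖) '' {x | 1 ≤ x.1}) :=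
    ⟨_, rfl⟩
  have hmemS : ∀ x : ℝ × Euc k, 1 ≤ x.1 → ‖y x‖ ≤ S := by
    intro x hx
    rw [hSdef]
    apply le_csSup
    · exact ⟨C, by rintro r ⟨x', hx', rfl⟩; exact hC x' hx'⟩
    · exact ⟨x, hx, rfl⟩
  have hS0 : 0 ≤ S := le_trans (norm_nonneg _) (hmemS (1, 0) (by norm_num))
  obtain ⟨M, hMdef⟩ : ∃ M : ℝ, M = Real.exp (2/3) * S := ⟨_, rfl⟩
  have hM0 : 0 ≤ M := by rw [hMdef]; exact mul_nonneg (Real.exp_pos _).le hS0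
  obtain ⟨A, hAdef⟩ : ∃ A : ℝ, A = S + 1 := ⟨_, rfl⟩
  have hA0 : (0:ℝ) ≤ A := by rw [hAdef]; linarith
  obtain ⟨W, hWdef⟩ : ∃ W : ℝ → ℝ,
      W = fun t => M * Real.exp (-(2/3) * (t * Real.sqrt t)) := ⟨_, rfl⟩
  have hWpos : ∀ t : ℝ, 0 ≤ W t := fun t => by
    rw [hWdef]; exact mul_nonneg hM0 (Real.exp_pos _).le
  have hW1 : W 1 = S := by
    rw [hWdef]
    simp only [Real.sqrt_one, mul_one, one_mul]
    rw [hMdef, mul_comm (Real.exp (2/3)) S, mul_assoc, ← Real.exp_add]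
    norm_num
  have key : ∀ R : ℝ, x₀.1 ≤ R → ∀ ε : ℝ, 0 < ε → ε ≤ 1 → ∀ δ : ℝ, 0 < δ →
      ‖y x₀‖ ≤ W x₀.1 + A * Real.exp (x₀.1 - R) + δ * (1 + ‖x₀.2‖ ^ 2)
        + (R * ε + 2 * (k:ℝ) * δ) := by
    intro R hR ε hε hε1 δ hδ
    have hR1 : (1:ℝ) ≤ R := le_trans hx₀ hR
    obtain ⟨v, hvdef⟩ : ∃ v : ℝ × Euc k → ℝ, v = fun x =>
        Real.sqrt (‖y x‖ ^ 2 + ε ^ 2)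
          - (W x.1 + A * Real.exp (x.1 - R) + δ * (1 + ‖x.2‖ ^ 2)
              + (R * ε + 2 * (k:ℝ) * δ)) := ⟨_, rfl⟩
    have main : ∀ x : ℝ × Euc k, 1 ≤ x.1 → x.1 ≤ R → v x ≤ 0 := by
      by_contra hcon
      push_neg at hcon
      obtain ⟨x₁, hx₁a, hx₁b, hx₁pos⟩ := hcon
      have hCb : ∀ x : ℝ × Euc k, 1 ≤ x.1 → Real.sqrt (‖y x‖ ^ 2 + ε ^ 2) ≤ S + 1 := by
        intro x hx
        have h1 : ‖y x‖ ^ 2 + ε ^ 2 ≤ (S + 1) ^ 2 := by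
          nlinarith [hmemS x hx, norm_nonneg (y x), hS0, hε1, hε]
        calc Real.sqrt (‖y x‖ ^ 2 + ε ^ 2) ≤ Real.sqrt ((S + 1) ^ 2) := Real.sqrt_le_sqrt h1
          _ = S + 1 := Real.sqrt_sq (by linarith)
      have hbd1 : ∀ x : ℝ × Euc k, x.1 = 1 → v x ≤ 0 := by
        intro x hx
        have h1 : Real.sqrt (‖y x‖ ^ 2 + ε ^ 2) ≤ S + ε := by
          have h2 : ‖y x‖ ^ 2 + ε ^ 2 ≤ (S + ε) ^ 2 := by
            nlinarith [hmemS x (le_of_eq hx.symm), norm_nonneg (y x), hS0]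
          calc Real.sqrt (‖y x‖ ^ 2 + ε ^ 2) ≤ Real.sqrt ((S + ε) ^ 2) := Real.sqrt_le_sqrt h2
            _ = S + ε := Real.sqrt_sq (by linarith)
        rw [hvdef]
        simp only
        rw [hx, hW1]
        have h3 : 0 ≤ A * Real.exp ((1:ℝ) - R) := mul_nonneg hA0 (Real.exp_pos _).le
        have h4 : 0 ≤ δ * (1 + ‖x.2‖ ^ 2) := mul_nonneg hδ.le (by positivity)
        have h5 : (0:ℝ) ≤ 2 * (k:ℝ) * δ := mul_nonneg (by positivity) hδ.le
        have h6 : ε ≤ R * ε := by nlinarith [mul_nonneg (sub_nonneg.mpr hR1) hε.le]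
        linarith [h1]
      have hbd2 : ∀ x : ℝ × Euc k, 1 ≤ x.1 → x.1 = R → v x ≤ 0 := by
        intro x hx1 hx
        have h1 := hCb x hx1
        rw [hvdef]
        simp only
        rw [hx]
        have h2 : A * Real.exp (R - R) = A := by simp
        have h4 : 0 ≤ δ * (1 + ‖x.2‖ ^ 2) := mul_nonneg hδ.le (by positivity)
        have h5 : (0:ℝ) ≤ 2 * (k:ℝ) * δ := mul_nonneg (by positivity) hδ.le
        have h6 : 0 ≤ R * ε := mul_nonneg (by linarith) hε.le
        have h7 := hWpos R
        linarith [h1, h2, hAdef]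
      have hδrpos : 0 < (S + 1) / δ := div_pos (by linarith) hδ
      obtain ⟨r₀, hr₀def⟩ : ∃ r₀ : ℝ, r₀ = ‖x₁.2‖ + Real.sqrt ((S + 1) / δ) + 1 := ⟨_, rfl⟩
      have houter : ∀ x : ℝ × Euc k, 1 ≤ x.1 → r₀ ≤ ‖x.2‖ → v x ≤ 0 := by
        intro x hx1 hz
        have h1 : Real.sqrt ((S + 1) / δ) ≤ ‖x.2‖ := by
          have := norm_nonneg x₁.2
          rw [hr₀def] at hz
          linarith
        have h2 : (S + 1) / δ ≤ ‖x.2‖ ^ 2 := by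
          have h3 := Real.sq_sqrt hδrpos.le
          nlinarith [Real.sqrt_nonneg ((S + 1) / δ), h1]
        have h4 : S + 1 ≤ ‖x.2‖ ^ 2 * δ := (div_le_iff₀ hδ).mp h2
        have h5 := hCb x hx1
        rw [hvdef]
        simp only
        have h6 : 0 ≤ A * Real.exp (x.1 - R) := mul_nonneg hA0 (Real.exp_pos _).le
        have h7 : 0 ≤ R * ε := mul_nonneg (by linarith) hε.le
        have h8 : (0:ℝ) ≤ 2 * (k:ℝ) * δ := mul_nonneg (by positivity) hδ.le
        have h9 := hWpos x.1
        nlinarith [h4, h5, hδ.le]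
      have hyc : Continuous y := hsmooth.continuous
      have hWc : Continuous W := by
        rw [hWdef]
        exact continuous_const.mul (Real.continuous_exp.comp
          (continuous_const.mul (continuous_id.mul Real.continuous_sqrt)))
      have hvc : Continuous v := by
        rw [hvdef]
        refine Continuous.sub ?_ ?_
        · exact Real.continuous_sqrt.comp (((hyc.norm).pow 2).add continuous_const)
        · refine Continuous.add (Continuous.add (Continuous.add ?_ ?_) ?_) continuous_const
          · exact hWc.comp continuous_fst
          · exact continuous_const.mul (Real.continuous_exp.comp
              (continuous_fst.sub continuous_const))
          · exact continuous_const.mul (continuous_const.add ((continuous_snd.norm).pow 2))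
      have hx₁K : x₁ ∈ Set.Icc (1:ℝ) R ×ˢ Metric.closedBall (0 : Euc k) r₀ := by
        refine ⟨⟨hx₁a, hx₁b⟩, mem_closedBall_zero_iff.mpr ?_⟩
        rw [hr₀def]
        have := Real.sqrt_nonneg ((S + 1) / δ)
        linarith
      obtain ⟨xs, hxsK, hmax⟩ := ((isCompact_Icc).prod
        (isCompact_closedBall (0 : Euc k) r₀)).exists_isMaxOn ⟨x₁, hx₁K⟩ hvc.continuousOn
      have hvx : 0 < v xs := lt_of_lt_of_le hx₁pos (hmax hx₁K)
      have hxs1 : 1 ≤ xs.1 := hxsK.1.1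
      have hxsR : xs.1 ≤ R := hxsK.1.2
      have hglobal : ∀ x : ℝ × Euc k, 1 ≤ x.1 → x.1 ≤ R → v x ≤ v xs := by
        intro x h1 h2
        by_cases hz : ‖x.2‖ ≤ r₀
        · exact hmax ⟨⟨h1, h2⟩, mem_closedBall_zero_iff.mpr hz⟩
        · push_neg at hz
          linarith [houter x h1 hz.le, hvx]
      have hxs1lt : 1 < xs.1 :=
        lt_of_le_of_ne hxs1 (fun h => absurd (hbd1 xs h.symm) (not_le.mpr hvx))
      have hxsRlt : xs.1 < R :=
        lt_of_le_of_ne hxsR (fun h => absurd (hbd2 xs hxs1 h) (not_le.mpr hvx))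
      have hU : IsOpen {x : ℝ × Euc k | 1 < x.1 ∧ x.1 < R} :=
        (isOpen_lt continuous_const continuous_fst).inter
          (isOpen_lt continuous_fst continuous_const)
      have hloc : IsLocalMax v xs :=
        Filter.eventually_of_mem (hU.mem_nhds ⟨hxs1lt, hxsRlt⟩)
          (fun x hx => hglobal x (le_of_lt hx.1) (le_of_lt hx.2))
      have ht0 : (0:ℝ) < xs.1 := by linarith
      obtain ⟨r, hrdef⟩ : ∃ r : ℝ, r = Real.sqrt (‖y xs‖ ^ 2 + ε ^ 2) := ⟨_, rfl⟩
      have hrpos : 0 < r := by rw [hrdef]; exact Real.sqrt_pos.mpr (by positivity)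
      have hr2 : r ^ 2 = ‖y xs‖ ^ 2 + ε ^ 2 := by
        rw [hrdef]; exact Real.sq_sqrt (by positivity)
      have hrε : ε ≤ r := by nlinarith [norm_nonneg (y xs), hrpos, hε]
      obtain ⟨gρ, Dρ, hgρ, hDρ, hDρge⟩ := rho_line hsmooth hε xs ((1:ℝ), (0:Euc k))
      obtain ⟨gW, DW, hgW, hDW, hDWle⟩ := Wline_second hM0 hxs1lt
      obtain ⟨gβ, Dβ, hgβ, hDβ, hDβle⟩ := betaline (R := R) hA0 hxs1lt.le
      have hc1 : ∀ s : ℝ, (xs + s • ((1:ℝ), (0:Euc k))).1 = xs.1 + s := fun s => by simp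
      have hc2 : ∀ s : ℝ, (xs + s • ((1:ℝ), (0:Euc k))).2 = xs.2 := fun s => by simp
      have hveq0 : (fun s : ℝ => v (xs + s • ((1:ℝ), (0:Euc k)))) = fun s =>
          Real.sqrt (‖y (xs + s • ((1:ℝ), (0:Euc k)))‖ ^ 2 + ε ^ 2)
            - (M * Real.exp (-(2/3) * ((xs.1 + s) * Real.sqrt (xs.1 + s)))
                + A * Real.exp (xs.1 + s - R) + δ * (1 + ‖xs.2‖ ^ 2)
                + (R * ε + 2 * (k:ℝ) * δ)) := by
        funext s
        simp only [hvdef, hWdef, hc1, hc2]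
      have hd10 : ∀ s ∈ Set.Ioo (-1:ℝ) 1,
          HasDerivAt (fun s : ℝ => v (xs + s • ((1:ℝ), (0:Euc k)))) (gρ s - (gW s + gβ s)) s := by
        intro s hs
        rw [hveq0]
        have h1 := (hgW s hs).add (hgβ s)
        have h2 := (h1.add_const (δ * (1 + ‖xs.2‖ ^ 2))).add_const (R * ε + 2 * (k:ℝ) * δ)
        exact (hgρ s).sub h2
      have hD0 := second_deriv_test_max one_pos hd10 (hDρ.sub (hDW.add hDβ))
        (isLocalMax_line _ hloc)
      have hWeq : W xs.1 = M * Real.exp (-(2/3) * (xs.1 * Real.sqrt xs.1)) := by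
        rw [hWdef]
      have hDρge' : ⟪y xs, d2 y ((1:ℝ), (0:Euc k)) xs⟫ / r ≤ Dρ := by
        rw [hrdef]; exact hDρge
      have hH0 : ⟪y xs, d2 y ((1:ℝ), (0:Euc k)) xs⟫ / r
          ≤ xs.1 * W xs.1 + xs.1 * (A * Real.exp (xs.1 - R)) := by
        rw [hWeq]
        linarith [hDρge', hD0, hDWle, hDβle]
      have hstep_j : ∀ j : Fin k,
          ⟪y xs, d2 y ((0:ℝ), EuclideanSpace.single j (1:ℝ)) xs⟫ / r ≤ 2 * δ := by
        intro j
        obtain ⟨gρ', Dρ', hgρ', hDρ', hDρge2⟩ :=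
          rho_line hsmooth hε xs ((0:ℝ), EuclideanSpace.single j (1:ℝ))
        obtain ⟨gz, Dz, hgz, hDz, hDzeq⟩ := zline xs.2 (EuclideanSpace.single j (1:ℝ))
        have hd1 : ∀ s : ℝ, (xs + s • ((0:ℝ), EuclideanSpace.single j (1:ℝ))).1 = xs.1 :=
          fun s => by simp
        have hd2' : ∀ s : ℝ, (xs + s • ((0:ℝ), EuclideanSpace.single j (1:ℝ))).2
            = xs.2 + s • EuclideanSpace.single j (1:ℝ) := fun s => by simp
        have hveqj : (fun s : ℝ => v (xs + s • ((0:ℝ), EuclideanSpace.single j (1:ℝ)))) = fun s =>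
            Real.sqrt (‖y (xs + s • ((0:ℝ), EuclideanSpace.single j (1:ℝ)))‖ ^ 2 + ε ^ 2)
              - (W xs.1 + A * Real.exp (xs.1 - R)
                  + δ * (1 + ‖xs.2 + s • EuclideanSpace.single j (1:ℝ)‖ ^ 2)
                  + (R * ε + 2 * (k:ℝ) * δ)) := by
          funext s
          simp only [hvdef, hd1, hd2']
        have hd1j : ∀ s ∈ Set.Ioo (-1:ℝ) 1,
            HasDerivAt (fun s : ℝ => v (xs + s • ((0:ℝ), EuclideanSpace.single j (1:ℝ))))
              (gρ' s - δ * gz s) s := by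
          intro s _
          rw [hveqj]
          have h1 : HasDerivAt
              (fun s : ℝ => 1 + ‖xs.2 + s • EuclideanSpace.single j (1:ℝ)‖ ^ 2) (gz s) s :=
            (hgz s).const_add 1
          have h2 := h1.const_mul δ
          have h3 := (h2.const_add (W xs.1 + A * Real.exp (xs.1 - R))).add_const
            (R * ε + 2 * (k:ℝ) * δ)
          exact (hgρ' s).sub h3
        have htest := second_deriv_test_max one_pos hd1j (hDρ'.sub (hDz.const_mul δ))
          (isLocalMax_line _ hloc)
        have hDz2 : Dz = 2 := by
          rw [hDzeq, EuclideanSpace.norm_single]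
          norm_num
        have hge : ⟪y xs, d2 y ((0:ℝ), EuclideanSpace.single j (1:ℝ)) xs⟫ / r ≤ Dρ' := by
          rw [hrdef]; exact hDρge2
        rw [hDz2] at htest
        linarith [hge, htest]
      have hsumj : ∑ j : Fin k, ⟪y xs, d2 y ((0:ℝ), EuclideanSpace.single j (1:ℝ)) xs⟫ / r
          ≤ (k:ℝ) * (2 * δ) := by
        calc ∑ j : Fin k, ⟪y xs, d2 y ((0:ℝ), EuclideanSpace.single j (1:ℝ)) xs⟫ / r
            ≤ ∑ _j : Fin k, 2 * δ := Finset.sum_le_sum (fun j _ => hstep_j j)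
          _ = (k:ℝ) * (2 * δ) := by
            rw [Finset.sum_const, Finset.card_univ, Fintype.card_fin, nsmul_eq_mul]
      have hinner : ⟪y xs, d2 y ((1:ℝ), (0:Euc k)) xs⟫
          + ∑ j : Fin k, ⟪y xs, d2 y ((0:ℝ), EuclideanSpace.single j (1:ℝ)) xs⟫
          = xs.1 * ‖y xs‖ ^ 2 + 2 * ‖y xs‖ ^ 2 * ‖y xs‖ ^ 2 := by
        have h1 : ⟪y xs, lap y xs⟫ = xs.1 * ‖y xs‖ ^ 2 + 2 * ‖y xs‖ ^ 2 * ‖y xs‖ ^ 2 := by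
          rw [hpde xs, inner_add_right, real_inner_smul_right, real_inner_smul_right,
            real_inner_self_eq_norm_sq]
          try ring
        rw [← h1]
        simp only [lap, inner_add_right, inner_sum]
      have hdivsum : (xs.1 * ‖y xs‖ ^ 2 + 2 * ‖y xs‖ ^ 2 * ‖y xs‖ ^ 2) / r
          ≤ xs.1 * W xs.1 + xs.1 * (A * Real.exp (xs.1 - R)) + (k:ℝ) * (2 * δ) := by
        rw [← hinner, add_div, Finset.sum_div]
        linarith [hH0, hsumj]
      have hF1 : xs.1 * ‖y xs‖ ^ 2 + 2 * ‖y xs‖ ^ 2 * ‖y xs‖ ^ 2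
          ≤ (xs.1 * W xs.1 + xs.1 * (A * Real.exp (xs.1 - R)) + (k:ℝ) * (2 * δ)) * r :=
        (div_le_iff₀ hrpos).mp hdivsum
      have hnn : ‖y xs‖ ^ 2 = r ^ 2 - ε ^ 2 := by linarith [hr2]
      have hF2 : xs.1 * r ≤ xs.1 * W xs.1 + xs.1 * (A * Real.exp (xs.1 - R))
          + (k:ℝ) * (2 * δ) + xs.1 * ε := by
        nlinarith [hF1, hnn, hrε, hrpos, sq_nonneg (‖y xs‖ ^ 2), ht0,
          mul_nonneg (mul_nonneg ht0.le hε.le) (sub_nonneg.mpr hrε)]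
      have hveqxs : v xs = r - (W xs.1 + A * Real.exp (xs.1 - R) + δ * (1 + ‖xs.2‖ ^ 2)
          + (R * ε + 2 * (k:ℝ) * δ)) := by
        simp only [hvdef]
        rw [hrdef]
      have hmulr : xs.1 * r = xs.1 * v xs + xs.1 * W xs.1 + xs.1 * (A * Real.exp (xs.1 - R))
          + xs.1 * (δ * (1 + ‖xs.2‖ ^ 2)) + xs.1 * (R * ε) + xs.1 * (2 * (k:ℝ) * δ) := by
        rw [hveqxs]; ring
      have e1 : 0 ≤ xs.1 * (δ * (1 + ‖xs.2‖ ^ 2)) :=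
        mul_nonneg ht0.le (mul_nonneg hδ.le (by positivity))
      have e2 : 0 ≤ xs.1 * (R * ε) - xs.1 * ε := by
        have h := mul_nonneg (mul_nonneg ht0.le hε.le) (sub_nonneg.mpr hR1)
        nlinarith [h]
      have e3 : 0 ≤ xs.1 * (2 * (k:ℝ) * δ) - (k:ℝ) * (2 * δ) := by
        have h := mul_nonneg (mul_nonneg (by positivity : (0:ℝ) ≤ 2 * (k:ℝ)) hδ.le)
          (sub_nonneg.mpr hxs1lt.le)
        nlinarith [h]
      have e4 : 0 < xs.1 * v xs := mul_pos ht0 hvx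
      clear hmax hglobal hloc hU hbd1 hbd2 houter hCb hvc hWc hd10 hveq0 hH0 hstep_j
        hsumj hinner hdivsum hF1 hDρge hDWle hDβle hD0 hgρ hDρ hgW hDW hgβ hDβ
      linarith [hF2, hmulr, e1, e2, e3, e4]
    have h0 := main x₀ hx₀ hR
    have hy0 : ‖y x₀‖ ≤ Real.sqrt (‖y x₀‖ ^ 2 + ε ^ 2) := by
      have h := Real.sqrt_le_sqrt (show ‖y x₀‖ ^ 2 ≤ ‖y x₀‖ ^ 2 + ε ^ 2 by nlinarith)
      rwa [Real.sqrt_sq (norm_nonneg _)] at h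
    rw [hvdef] at h0
    simp only at h0
    linarith
  have step1 : ∀ R : ℝ, x₀.1 ≤ R → ‖y x₀‖ ≤ W x₀.1 + A * Real.exp (x₀.1 - R) := by
    intro R hR
    by_contra hcon
    push_neg at hcon
    obtain ⟨η, hηdef⟩ : ∃ η : ℝ, η = ‖y x₀‖ - (W x₀.1 + A * Real.exp (x₀.1 - R)) := ⟨_, rfl⟩
    have hη : 0 < η := by rw [hηdef]; linarith
    have hR0 : (0:ℝ) < R := lt_of_lt_of_le (by linarith) hR
    obtain ⟨ε, hεdef⟩ : ∃ ε : ℝ, ε = min 1 (η / (4 * R)) := ⟨_, rfl⟩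
    have hε : 0 < ε := by
      rw [hεdef]
      exact lt_min one_pos (div_pos hη (by linarith))
    obtain ⟨Q, hQdef⟩ : ∃ Q : ℝ, Q = 1 + ‖x₀.2‖ ^ 2 + 2 * (k:ℝ) := ⟨_, rfl⟩
    have hQ : 0 < Q := by rw [hQdef]; positivity
    obtain ⟨δ, hδdef⟩ : ∃ δ : ℝ, δ = η / (4 * Q) := ⟨_, rfl⟩
    have hδ : 0 < δ := by rw [hδdef]; exact div_pos hη (by linarith)
    have h := key R hR ε hε (by rw [hεdef]; exact min_le_left _ _) δ hδ
    have h1 : R * ε ≤ η / 4 := by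
      have h2 : ε ≤ η / (4 * R) := by rw [hεdef]; exact min_le_right _ _
      calc R * ε ≤ R * (η / (4 * R)) := by nlinarith
        _ = η / 4 := by field_simp
    have h2 : δ * (1 + ‖x₀.2‖ ^ 2) + 2 * (k:ℝ) * δ ≤ η / 2 := by
      have he : δ * (1 + ‖x₀.2‖ ^ 2) + 2 * (k:ℝ) * δ = δ * Q := by rw [hQdef]; ring
      have he2 : δ * Q = η / 4 := by
        rw [hδdef]
        field_simp
      rw [he, he2]
      linarith
    rw [hηdef] at h1 h2
    linarith
  have final : ‖y x₀‖ ≤ W x₀.1 := by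
    have hlim : Filter.Tendsto (fun R : ℝ => W x₀.1 + A * Real.exp (x₀.1 - R)) atTop
        (𝓝 (W x₀.1 + A * 0)) := by
      apply Filter.Tendsto.add tendsto_const_nhds
      apply Filter.Tendsto.const_mul
      apply Real.tendsto_exp_atBot.comp
      apply Filter.tendsto_atBot_add_const_left
      exact Filter.tendsto_neg_atBot_iff.mpr Filter.tendsto_id
    have hev : ∀ᶠ R in (atTop : Filter ℝ), ‖y x₀‖ ≤ W x₀.1 + A * Real.exp (x₀.1 - R) := by
      filter_upwards [Filter.eventually_ge_atTop x₀.1] with R hR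
      exact step1 R hR
    have := ge_of_tendsto hlim hev
    simpa using this
  have hrpow : x₀.1 * Real.sqrt x₀.1 = x₀.1 ^ ((3:ℝ)/2) := by
    have h0 : (0:ℝ) < x₀.1 := by linarith
    rw [Real.sqrt_eq_rpow]
    nth_rewrite 1 [show x₀.1 = x₀.1 ^ (1:ℝ) from (Real.rpow_one _).symm]
    rw [← Real.rpow_add h0]
    norm_num
  rw [hWdef] at final
  simp only at final
  rw [hrpow] at final
  rw [← hSdef, ← hMdef]
  exact final
end

section
/- Let n, m ≥ 1 and let y : ℝⁿ → ℝᵐ be a minimal solution of the extended Painlevé PDE. Then y is not identically equal to zero. -/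
open MeasureTheory Filter
open scoped Topology RealInnerProductSpace ContDiff

open Metric in
set_option maxHeartbeats 1000000 in
/-- A minimal solution of the extended Painlevé P.D.E. is not
identically zero. -/
theorem statement4 {k m : ℕ} (hm : 1 ≤ m) (y : ℝ × Euc k → Euc m)
    (hy : IsPainleve y) (hmin : IsMinimal y) :
    ¬ (∀ x : ℝ × Euc k, y x = 0) := by
  intro h0
  have hyz : y = fun _ => (0 : Euc m) := funext h0
  subst hyz
  clear hy
  haveI hHaar : (volume : Measure (ℝ × Euc k)).IsAddHaarMeasure :=
    Measure.prod.instIsAddHaarMeasure _ _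
  have hone : (1 : WithTop ℕ∞) ≤ ∞ := by exact_mod_cast (le_top : (1:ℕ∞) ≤ ⊤)
  -- the bump and the base profile
  set e : Euc m := EuclideanSpace.single ⟨0, hm⟩ (1 : ℝ) with he_def
  have hnorme : ‖e‖ = 1 := by simp [he_def]
  have he0 : e ≠ 0 := by
    intro h; rw [h, norm_zero] at hnorme; norm_num at hnorme
  set b : ContDiffBump (0 : ℝ × Euc k) := ⟨1, 2, one_pos, one_lt_two⟩ with hb_def
  set φ₀ : ℝ × Euc k → Euc m := fun w => b w • e with hφ₀_def
  have hφ₀smooth : ContDiff ℝ ∞ φ₀ := b.contDiff.smul contDiff_const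
  have hφ₀diff : Differentiable ℝ φ₀ := hφ₀smooth.differentiable (by simp)
  have hfderiv_cont : Continuous (fun w => fderiv ℝ φ₀ w) := hφ₀smooth.continuous_fderiv (by simp)
  have hgrad_cont : Continuous (gradSq φ₀) := by
    unfold gradSq
    refine Continuous.add ?_ ?_
    · exact (((ContinuousLinearMap.apply ℝ (Euc m)
        ((1:ℝ),(0:Euc k))).continuous.comp hfderiv_cont).norm.pow 2)
    · exact continuous_finset_sum _ fun j _ =>
        (((ContinuousLinearMap.apply ℝ (Euc m)
          ((0:ℝ), EuclideanSpace.single j 1)).continuous.comp hfderiv_cont).norm.pow 2)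
  have hgradSq_nonneg : ∀ (u : ℝ × Euc k → Euc m) (w : ℝ × Euc k), 0 ≤ gradSq u w := by
    intro u w
    unfold gradSq
    refine add_nonneg (by positivity) (Finset.sum_nonneg fun j _ => by positivity)
  set H : ℝ × Euc k → ℝ := fun w => 1/2 * gradSq φ₀ w + 1/2 * ‖φ₀ w‖ ^ 4 with hH_def
  have hHcont : Continuous H :=
    (continuous_const.mul hgrad_cont).add
      (continuous_const.mul ((hφ₀smooth.continuous.norm).pow 4))
  obtain ⟨z, hzK, hzmax'⟩ := (isCompact_closedBall (0 : ℝ × Euc k) 2).exists_isMaxOn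
      ⟨0, mem_closedBall_self (by norm_num)⟩ hHcont.continuousOn
  have hzmax : ∀ w ∈ closedBall (0 : ℝ × Euc k) 2, H w ≤ H z := fun w hw => hzmax' hw
  set M := H z with hM_def
  have hM0 : 0 ≤ M := by
    have h1 : 0 ≤ gradSq φ₀ z := hgradSq_nonneg _ _
    have h2 : 0 ≤ ‖φ₀ z‖ ^ 4 := by positivity
    rw [hM_def, hH_def]
    dsimp only
    linarith
  -- constants
  set B := (volume (ball (0 : ℝ × Euc k) 1)).toReal with hB_def
  have hBpos : 0 < B :=
    ENNReal.toReal_pos (measure_ball_pos _ _ one_pos).ne' measure_ball_lt_top.ne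
  set V := (volume (closedBall (0 : ℝ × Euc k) 2)).toReal with hV_def
  set T : ℝ := max 2 (2 + 2 * (M * V + 1) / B) with hT_def
  have hT2 : (2:ℝ) ≤ T := le_max_left _ _
  have hT3 : 2 + 2 * (M * V + 1) / B ≤ T := le_max_right _ _
  set c₀ : ℝ × Euc k := (-T, 0) with hc₀_def
  -- the perturbation
  set φ : ℝ × Euc k → Euc m := fun x => φ₀ (x - c₀) with hφ_def
  have hφsmooth : ContDiff ℝ ∞ φ := hφ₀smooth.comp (contDiff_id.sub contDiff_const)
  have hzero : ∀ x, x ∉ closedBall c₀ 2 → φ x = 0 := by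
    intro x hx
    have hd : b.rOut ≤ dist (x - c₀) 0 := by
      have h2 : ¬ dist x c₀ ≤ 2 := fun h => hx (mem_closedBall.mpr h)
      have h3 : (2:ℝ) ≤ dist (x - c₀) 0 := by
        rw [dist_zero_right, ← dist_eq_norm]
        linarith [not_le.mp h2]
      exact h3
    rw [hφ_def]
    simp only [hφ₀_def, b.zero_of_le_dist hd, zero_smul]
  have hφsupp : HasCompactSupport φ :=
    HasCompactSupport.intro (isCompact_closedBall c₀ 2) hzero
  set Ω := tsupport φ with hΩ_def
  have hΩsub : Ω ⊆ closedBall c₀ 2 :=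
    closure_minimal (Function.support_subset_iff'.mpr hzero) Metric.isClosed_closedBall
  have hΩmeas : MeasurableSet Ω := (isClosed_tsupport φ).measurableSet
  have hΩcompact : IsCompact Ω := hφsupp
  have hball : ball c₀ 1 ⊆ Ω := by
    intro x hx
    apply subset_closure
    rw [Function.mem_support]
    have hmem : x - c₀ ∈ closedBall (0 : ℝ × Euc k) b.rIn := by
      rw [mem_closedBall, dist_zero_right, ← dist_eq_norm]
      exact le_of_lt (mem_ball.mp hx)
    have h1 : b (x - c₀) = 1 := b.one_of_mem_closedBall hmem
    rw [hφ_def]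
    simp only [hφ₀_def, h1, one_smul]
    exact he0
  -- derivatives of the translate
  have hfd : ∀ (x : ℝ × Euc k) (v : ℝ × Euc k),
      fderiv ℝ φ x v = fderiv ℝ φ₀ (x - c₀) v := by
    intro x v
    have h : HasFDerivAt (fun y : ℝ × Euc k => φ₀ (y - c₀))
        ((fderiv ℝ φ₀ (x - c₀)).comp (ContinuousLinearMap.id ℝ (ℝ × Euc k))) x :=
      by have := HasFDerivAt.comp x (hφ₀diff (x - c₀)).hasFDerivAt ((hasFDerivAt_id x).sub_const c₀); exact this
    rw [hφ_def, h.fderiv]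
    rfl
  have hgradeq : ∀ x, gradSq φ x = gradSq φ₀ (x - c₀) := by
    intro x
    unfold gradSq
    rw [hfd]
    congr 1
    exact Finset.sum_congr rfl fun j _ => by rw [hfd]
  have hgradφ_cont : Continuous (gradSq φ) := by
    have : gradSq φ = fun x => gradSq φ₀ (x - c₀) := funext hgradeq
    rw [this]
    exact hgrad_cont.comp (continuous_id.sub continuous_const)
  -- integrand bound
  set F : ℝ × Euc k → ℝ :=
    fun x => 1/2 * gradSq φ x + 1/2 * x.1 * ‖φ x‖ ^ 2 + 1/2 * ‖φ x‖ ^ 4 with hF_def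
  have hEPφ : EP φ Ω = ∫ x in Ω, F x := rfl
  set g : ℝ × Euc k → ℝ := fun x => ‖φ x‖ ^ 2 with hg_def
  have hgcont : Continuous g := (hφsmooth.continuous.norm).pow 2
  have hFcont : Continuous F := by
    refine Continuous.add (Continuous.add ?_ ?_) ?_
    · exact continuous_const.mul hgradφ_cont
    · exact (continuous_const.mul continuous_fst).mul ((hφsmooth.continuous.norm).pow 2)
    · exact continuous_const.mul ((hφsmooth.continuous.norm).pow 4)
  have hpt : ∀ x ∈ Ω, F x ≤ M + (2 - T)/2 * g x := by
    intro x hx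
    have hxK : x - c₀ ∈ closedBall (0:ℝ×Euc k) 2 := by
      have h := hΩsub hx
      rw [mem_closedBall] at h ⊢
      rw [dist_zero_right, ← dist_eq_norm]
      exact h
    have hHb : 1/2 * gradSq φ x + 1/2 * ‖φ x‖ ^ 4 ≤ M := by
      have h := hzmax _ hxK
      rw [hgradeq x]
      have hφval : ‖φ x‖ = ‖φ₀ (x - c₀)‖ := by rw [hφ_def]
      rw [hφval]
      exact h
    have hx1 : x.1 ≤ 2 - T := by
      have h2 := hΩsub hx
      rw [mem_closedBall, Prod.dist_eq] at h2
      have h3 : dist x.1 c₀.1 ≤ 2 := le_trans (le_max_left _ _) h2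
      have h4 : |x.1 - (-T)| ≤ 2 := by
        have : c₀.1 = -T := rfl
        rwa [this, Real.dist_eq] at h3
      have h5 := (abs_le.mp h4).2
      linarith
    have hg0 : 0 ≤ g x := by rw [hg_def]; positivity
    have hgle : 1/2 * x.1 * g x ≤ (2 - T)/2 * g x := by
      nlinarith [mul_nonneg (sub_nonneg.mpr hx1) hg0]
    have hFx : F x = (1/2 * gradSq φ x + 1/2 * ‖φ x‖ ^ 4) + 1/2 * x.1 * g x := by
      rw [hF_def, hg_def]; ring
    rw [hFx]
    linarith
  -- integrability
  have hFint : IntegrableOn F Ω := hFcont.continuousOn.integrableOn_compact hΩcompact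
  have hgint : IntegrableOn g Ω := hgcont.continuousOn.integrableOn_compact hΩcompact
  have hRHSint : IntegrableOn (fun x => M + (2 - T)/2 * g x) Ω :=
    (continuous_const.add (continuous_const.mul hgcont)).continuousOn.integrableOn_compact
      hΩcompact
  -- main estimate
  have step1 : ∫ x in Ω, F x ≤ ∫ x in Ω, (M + (2 - T)/2 * g x) :=
    setIntegral_mono_on hFint hRHSint hΩmeas hpt
  have step2 : ∫ x in Ω, (M + (2 - T)/2 * g x) =
      M * (volume Ω).toReal + (2 - T)/2 * ∫ x in Ω, g x := by
    rw [integral_add (integrableOn_const (C := M) hΩcompact.measure_lt_top.ne)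
      (hgint.const_mul _), setIntegral_const, integral_const_mul, Measure.real, smul_eq_mul, mul_comm]
  have hμΩ : (volume Ω).toReal ≤ V := by
    rw [hV_def, ← Measure.addHaar_closedBall_center volume c₀]
    exact ENNReal.toReal_mono measure_closedBall_lt_top.ne (measure_mono hΩsub)
  have h1 : M * (volume Ω).toReal ≤ M * V := mul_le_mul_of_nonneg_left hμΩ hM0
  have hgB : B ≤ ∫ x in Ω, g x := by
    have h2 : ∫ x in ball c₀ 1, g x ≤ ∫ x in Ω, g x := by
      refine setIntegral_mono_set hgint ?_ (HasSubset.Subset.eventuallyLE hball)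
      exact Filter.Eventually.of_forall fun x => by rw [hg_def]; positivity
    have h3 : ∫ x in ball c₀ 1, g x = B := by
      have heq : Set.EqOn g (fun _ => (1:ℝ)) (ball c₀ 1) := by
        intro x hx
        have hmem : x - c₀ ∈ closedBall (0 : ℝ × Euc k) b.rIn := by
          rw [mem_closedBall, dist_zero_right, ← dist_eq_norm]
          exact le_of_lt (mem_ball.mp hx)
        have hb1 : b (x - c₀) = 1 := b.one_of_mem_closedBall hmem
        rw [hg_def, hφ_def]
        simp only [hφ₀_def, hb1, one_smul]
        rw [hnorme]; norm_num
      rw [setIntegral_congr_fun measurableSet_ball heq, setIntegral_const, smul_eq_mul,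
        mul_one, Measure.real, hB_def, Measure.addHaar_ball_center]
    linarith
  have h2 : (2 - T)/2 * (∫ x in Ω, g x) ≤ (2 - T)/2 * B :=
    mul_le_mul_of_nonpos_left hgB (by linarith)
  have hTB : 2 * (M * V + 1) ≤ (T - 2) * B := by
    have h := (div_le_iff₀ hBpos).mp (by linarith : 2 * (M * V + 1) / B ≤ T - 2)
    linarith
  clear_value M B V T
  have hneg : EP φ Ω < 0 := by
    rw [hEPφ]
    have hfin : M * V + (2 - T)/2 * B ≤ -1 := by nlinarith
    calc ∫ x in Ω, F x ≤ M * (volume Ω).toReal + (2 - T)/2 * ∫ x in Ω, g x := by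
          rw [← step2]; exact step1
      _ ≤ M * V + (2 - T)/2 * B := by linarith
      _ ≤ -1 := hfin
      _ < 0 := by norm_num
  -- contradiction with minimality
  have hminφ := hmin φ hφsmooth hφsupp
  have hzero_add : (fun _ => (0:Euc m)) + φ = φ := by funext x; simp
  have hEP0 : EP (fun _ => (0:Euc m)) Ω = 0 := by
    have : ∀ x : ℝ × Euc k,
        (1/2 : ℝ) * gradSq (fun _ => (0:Euc m)) x
          + 1/2 * x.1 * ‖(fun _ => (0:Euc m)) x‖ ^ 2
          + 1/2 * ‖(fun _ => (0:Euc m)) x‖ ^ 4 = 0 := by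
      intro x
      simp [gradSq]
    simp only [EP]
    rw [setIntegral_congr_fun hΩmeas (fun x _ => this x)]
    simp
  rw [hzero_add, ← hΩ_def, hEP0] at hminφ
  linarith
end

section
/- Let m ≥ 1 and let h be the Hastings–McLeod solution. Let y : ℝ → ℝᵐ be a smooth solution of the one-dimensional extended Painlevé system y''(x) = x·y(x) + 2|y(x)|²·y(x) which is bounded on [0, ∞). Then y is a minimal solution if and only if there exists a unit vector ν ∈ ℝᵐ such that y(x) = h(x)·ν for all x ∈ ℝ. -/
open MeasureTheory Filter
open scoped Topology RealInnerProductSpace ContDiff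

namespace S6
open Set Function

lemma oneinf : (1 : WithTop ℕ∞) ≤ ∞ := by exact_mod_cast le_top

variable {F : Type*} [NormedAddCommGroup F] [NormedSpace ℝ F]

lemma hD {f : ℝ → F} (hf : ContDiff ℝ ∞ f) (x : ℝ) : HasDerivAt f (deriv f x) x :=
  (hf.differentiable (by simp) x).hasDerivAt

lemma cD {f : ℝ → F} (hf : ContDiff ℝ ∞ f) : ContDiff ℝ ∞ (deriv f) :=
  (contDiff_infty_iff_deriv.mp hf).2

lemma intOn {f : ℝ → ℝ} (hf : Continuous f) {Ω : Set ℝ} (hΩ : IsCompact Ω) :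
    IntegrableOn f Ω :=
  hf.continuousOn.integrableOn_compact hΩ

lemma integral_deriv_zero [CompleteSpace F] {G : ℝ → F} (hG : ContDiff ℝ ∞ G)
    (hGc : HasCompactSupport G) {Ω : Set ℝ} (hsub : tsupport G ⊆ Ω) :
    ∫ x in Ω, deriv G x = 0 := by
  have hd0 : ∀ x ∉ tsupport G, deriv G x = 0 := by
    intro x hx
    by_contra hne
    exact hx (support_deriv_subset (mem_support.mpr hne))
  have h1 : ∫ x in Ω, deriv G x = ∫ x, deriv G x :=
    setIntegral_eq_integral_of_forall_compl_eq_zero fun x hx => hd0 x fun h => hx (hsub h)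
  obtain ⟨R, hR⟩ := hGc.isBounded.subset_closedBall 0
  have hnmem : ∀ x : ℝ, R < |x| → x ∉ tsupport G := by
    intro x hx hmem
    have := hR hmem
    rw [Metric.mem_closedBall, Real.dist_eq, sub_zero] at this
    linarith
  set S : ℝ := |R| + 1 with hS
  have habs := le_abs_self R
  have hnot : ∀ x : ℝ, x ∉ Set.Ioc (-S) S → x ∉ tsupport G := by
    intro x hx
    apply hnmem
    simp only [Set.mem_Ioc, not_and_or, not_lt, not_le] at hx
    rcases hx with hx | hx
    · have := neg_le_abs x; simp only [hS] at hx; linarith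
    · have := le_abs_self x; simp only [hS] at hx; linarith
  have hle : -S ≤ S := by
    have := abs_nonneg R; simp only [hS]; linarith
  have h2 : ∫ x, deriv G x = ∫ x in Set.Ioc (-S) S, deriv G x :=
    (setIntegral_eq_integral_of_forall_compl_eq_zero fun x hx => hd0 x (hnot x hx)).symm
  have h3 : ∫ x in Set.Ioc (-S) S, deriv G x = G S - G (-S) := by
    rw [← intervalIntegral.integral_of_le hle]
    exact intervalIntegral.integral_deriv_eq_sub
      (fun x _ => hG.differentiable (by simp) x) ((cD hG).continuous.intervalIntegrable _ _)
  have hzS : G S = 0 := by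
    apply image_eq_zero_of_notMem_tsupport
    apply hnmem
    rw [abs_of_pos (by positivity)]
    simp only [hS]; linarith
  have hzS' : G (-S) = 0 := by
    apply image_eq_zero_of_notMem_tsupport
    apply hnmem
    rw [abs_neg, abs_of_pos (by positivity)]
    simp only [hS]; linarith
  rw [h1, h2, h3, hzS, hzS', sub_zero]

lemma backward {m : ℕ} {h : ℝ → ℝ} (hsm : ContDiff ℝ ∞ h)
    (hodeh : ∀ x : ℝ, deriv (deriv h) x = x * h x + 2 * (h x) ^ 3)
    (hpos : ∀ x, 0 < h x) {ν : Euc m} (hν : ‖ν‖ = 1) :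
    IsMinimal1 (fun x : ℝ => h x • ν) := by
  intro φ hφ hφc
  set Ω := tsupport φ with hΩdef
  have hΩcomp : IsCompact Ω := hφc
  have hΩmeas : MeasurableSet Ω := (isClosed_tsupport φ).measurableSet
  set y : ℝ → Euc m := fun x => h x • ν with hy
  have hysm : ContDiff ℝ ∞ y := hsm.smul contDiff_const
  have hne : ∀ t, h t ≠ 0 := fun t => (hpos t).ne'
  have hyd : ∀ x, HasDerivAt y (deriv h x • ν) x := fun x => (hD hsm x).smul_const ν
  have hyderiv : ∀ x, deriv y x = deriv h x • ν := fun x => (hyd x).deriv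
  have hφd : ∀ x, HasDerivAt φ (deriv φ x) x := hD hφ
  have hsumd : ∀ x, deriv (y + φ) x = deriv h x • ν + deriv φ x := fun x =>
    ((hyd x).add (hφd x)).deriv
  set G : ℝ → ℝ := fun t => deriv h t * ⟪φ t, ν⟫ +
      1 / 2 * (deriv h t * (h t)⁻¹) * ⟪φ t, φ t⟫ with hGdef
  set R : ℝ → ℝ := fun t => (1 / 2) * ‖deriv φ t - (deriv h t * (h t)⁻¹) • φ t‖ ^ 2 +
      (1 / 2) * (‖φ t‖ ^ 2 + 2 * h t * ⟪φ t, ν⟫) ^ 2 with hRdef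
  set I0 : ℝ → ℝ := fun x =>
    (1 / 2) * ‖deriv y x‖ ^ 2 + (1 / 2) * x * ‖y x‖ ^ 2 + (1 / 2) * ‖y x‖ ^ 4 with hI0def
  set I1 : ℝ → ℝ := fun x =>
    (1 / 2) * ‖deriv (y + φ) x‖ ^ 2 + (1 / 2) * x * ‖(y + φ) x‖ ^ 2 +
      (1 / 2) * ‖(y + φ) x‖ ^ 4 with hI1def
  -- pointwise identity
  have key : ∀ t, I1 t - I0 t = deriv G t + R t := by
    intro t
    have hht := hD hsm t
    have hht2 := hD (cD hsm) t
    have hφt := hφd t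
    have hA : HasDerivAt (fun s => ⟪φ s, ν⟫) (⟪φ t, (0 : Euc m)⟫ + ⟪deriv φ t, ν⟫) t :=
      hφt.inner ℝ (hasDerivAt_const t ν)
    have hN : HasDerivAt (fun s => ⟪φ s, φ s⟫) (⟪φ t, deriv φ t⟫ + ⟪deriv φ t, φ t⟫) t :=
      hφt.inner ℝ hφt
    have hInv : HasDerivAt (fun s => (h s)⁻¹) (-deriv h t / h t ^ 2) t :=
      hht.inv (hne t)
    have hB : HasDerivAt (fun s => deriv h s * (h s)⁻¹)
        (deriv (deriv h) t * (h t)⁻¹ + deriv h t * (-deriv h t / h t ^ 2)) t :=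
      hht2.mul hInv
    have hGd : HasDerivAt G
        ((deriv (deriv h) t * ⟪φ t, ν⟫ + deriv h t * (⟪φ t, (0 : Euc m)⟫ + ⟪deriv φ t, ν⟫)) +
          ((1 / 2 * (deriv (deriv h) t * (h t)⁻¹ + deriv h t * (-deriv h t / h t ^ 2))) *
              ⟪φ t, φ t⟫ +
            1 / 2 * (deriv h t * (h t)⁻¹) * (⟪φ t, deriv φ t⟫ + ⟪deriv φ t, φ t⟫))) t :=
      (hht2.mul hA).add ((hB.const_mul (1 / 2)).mul hN)
    rw [hGd.deriv]
    have hyderiv' : ∀ x, deriv (fun x => h x • ν) x = deriv h x • ν := hyderiv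
    have hsumd' : ∀ x, deriv ((fun x => h x • ν) + φ) x = deriv h x • ν + deriv φ x := hsumd
    simp only [hI1def, hI0def, hRdef, hy, hsumd, hsumd', hyderiv, hyderiv', Pi.add_apply]
    have h4 : ∀ v : Euc m, ‖v‖ ^ 4 = (‖v‖ ^ 2) ^ 2 := fun v => by ring
    rw [h4, h4]
    simp only [norm_add_sq_real, norm_sub_sq_real, norm_smul, Real.norm_eq_abs, mul_pow,
      sq_abs, hν, real_inner_smul_left, real_inner_smul_right, inner_zero_right,
      ← real_inner_self_eq_norm_sq]
    rw [hodeh t]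
    simp only [inner_add_left, inner_add_right, inner_sub_left, inner_sub_right,
      real_inner_smul_left, real_inner_smul_right, inner_zero_left, inner_zero_right]
    have hc1 : ⟪ν, φ t⟫ = ⟪φ t, ν⟫ := real_inner_comm _ _
    have hc2 : ⟪ν, deriv φ t⟫ = ⟪deriv φ t, ν⟫ := real_inner_comm _ _
    have hc3 : ⟪deriv φ t, φ t⟫ = ⟪φ t, deriv φ t⟫ := real_inner_comm _ _
    have hνν : ⟪ν, ν⟫ = 1 := by rw [real_inner_self_eq_norm_sq, hν]; norm_num
    simp only [hc1, hc2, hc3, hνν]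
    have hHne := hne t
    field_simp
    ring
  -- continuity facts
  have hcφ' : Continuous (deriv φ) := (cD hφ).continuous
  have hcy' : Continuous (deriv y) := (cD hysm).continuous
  have hcyφ' : Continuous (deriv (y + φ)) := (cD (hysm.add hφ)).continuous
  have hinvc : Continuous fun t => (h t)⁻¹ := hsm.continuous.inv₀ hne
  have hI0c : Continuous I0 := by
    rw [hI0def]
    exact ((continuous_const.mul (hcy'.norm.pow 2)).add
      ((continuous_const.mul continuous_id).mul (hysm.continuous.norm.pow 2))).add
      (continuous_const.mul (hysm.continuous.norm.pow 4))
  have hI1c : Continuous I1 := by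
    rw [hI1def]
    exact ((continuous_const.mul (hcyφ'.norm.pow 2)).add
      ((continuous_const.mul continuous_id).mul ((hysm.add hφ).continuous.norm.pow 2))).add
      (continuous_const.mul ((hysm.add hφ).continuous.norm.pow 4))
  have hRc : Continuous R := by
    rw [hRdef]
    exact (continuous_const.mul
        (((hcφ'.sub ((((cD hsm).continuous.mul hinvc)).smul hφ.continuous)).norm).pow 2)).add
      (continuous_const.mul (((hφ.continuous.norm.pow 2).add
        ((continuous_const.mul hsm.continuous).mul
          (hφ.continuous.inner continuous_const))).pow 2))
  have hGsm : ContDiff ℝ ∞ G := by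
    rw [hGdef]
    exact ((cD hsm).mul (hφ.inner ℝ contDiff_const)).add
      ((contDiff_const.mul ((cD hsm).mul (hsm.inv hne))).mul (hφ.inner ℝ hφ))
  have hsuppG : tsupport G ⊆ Ω := by
    rw [hΩdef]
    apply closure_mono
    intro t ht
    simp only [Function.mem_support] at ht ⊢
    intro hzero
    apply ht
    simp [hGdef, hzero]
  have hGc : HasCompactSupport G :=
    hΩcomp.of_isClosed_subset (isClosed_tsupport G) hsuppG
  have hI0int : IntegrableOn I0 Ω := intOn hI0c hΩcomp
  have hI1int : IntegrableOn I1 Ω := intOn hI1c hΩcomp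
  have hRint : IntegrableOn R Ω := intOn hRc hΩcomp
  have hGint : IntegrableOn (deriv G) Ω := intOn (cD hGsm).continuous hΩcomp
  have e1 : EP1 (y + φ) Ω = ∫ x in Ω, I1 x := rfl
  have e0 : EP1 y Ω = ∫ x in Ω, I0 x := rfl
  have hsub2 : (∫ x in Ω, I1 x) - (∫ x in Ω, I0 x) = ∫ x in Ω, (I1 x - I0 x) :=
    (integral_sub hI1int hI0int).symm
  have h2 : ∫ x in Ω, (I1 x - I0 x) = ∫ x in Ω, (deriv G x + R x) := by
    simp only [key]
  have h3 : ∫ x in Ω, (deriv G x + R x) = (∫ x in Ω, deriv G x) + ∫ x in Ω, R x :=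
    integral_add hGint hRint
  have h4 : ∫ x in Ω, deriv G x = 0 := integral_deriv_zero hGsm hGc hsuppG
  have h5 : 0 ≤ ∫ x in Ω, R x :=
    setIntegral_nonneg hΩmeas fun x _ => by simp only [hRdef]; positivity
  rw [e1, e0]
  linarith

section Fwd
variable {m : ℕ} {y : ℝ → Euc m}

lemma decay (hysmooth : ContDiff ℝ ∞ y)
    (hode : ∀ x : ℝ, deriv (deriv y) x = x • y x + (2 * ‖y x‖ ^ 2) • y x)
    (hbdd : ∃ C : ℝ, ∀ x ≥ (0 : ℝ), ‖y x‖ ≤ C) :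
    ∀ ε > (0 : ℝ), ∃ t ≥ (1 : ℝ), ‖y t‖ * ‖deriv y t‖ < ε := by
  obtain ⟨C, hC⟩ := hbdd
  set f : ℝ → ℝ := fun x => ⟪y x, y x⟫ with hfdef
  set F : ℝ → ℝ := fun x => ⟪y x, deriv y x⟫ + ⟪deriv y x, y x⟫ with hFdef
  have hfnorm : ∀ x, f x = ‖y x‖ ^ 2 := fun x => real_inner_self_eq_norm_sq _
  have hfnonneg : ∀ x, 0 ≤ f x := fun x => (hfnorm x) ▸ (sq_nonneg _)
  have hfF : ∀ x, HasDerivAt f (F x) x := fun x => (hD hysmooth x).inner ℝ (hD hysmooth x)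
  have hFD : ∀ x, HasDerivAt F
      (2 * ‖deriv y x‖ ^ 2 + 2 * x * f x + 4 * f x ^ 2) x := by
    intro x
    have h1 : HasDerivAt F
        ((⟪y x, deriv (deriv y) x⟫ + ⟪deriv y x, deriv y x⟫) +
          (⟪deriv y x, deriv y x⟫ + ⟪deriv (deriv y) x, y x⟫)) x :=
      ((hD hysmooth x).inner ℝ (hD (cD hysmooth) x)).add
        ((hD (cD hysmooth) x).inner ℝ (hD hysmooth x))
    convert h1 using 1
    rw [hode x]
    simp only [inner_add_right, inner_add_left, real_inner_smul_right, real_inner_smul_left,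
      real_inner_self_eq_norm_sq, ← hfnorm]
    ring
  have hFdiff : Differentiable ℝ F := fun x => (hFD x).differentiableAt
  have hfbd : ∀ x ≥ (0:ℝ), f x ≤ C ^ 2 := by
    intro x hx
    rw [hfnorm]
    have := hC x hx
    nlinarith [norm_nonneg (y x)]
  -- F is monotone on [0, ∞)
  have hFmono : MonotoneOn F (Ici 0) := by
    apply monotoneOn_of_deriv_nonneg (convex_Ici 0) hFdiff.continuous.continuousOn
      hFdiff.differentiableOn
    intro x hx
    rw [interior_Ici, mem_Ioi] at hx
    rw [(hFD x).deriv]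
    have := hfnonneg x
    nlinarith [sq_nonneg (‖deriv y x‖)]
  -- F ≤ 0 on [0, ∞)
  have hFle : ∀ x ≥ (0:ℝ), F x ≤ 0 := by
    intro x₁ hx₁
    by_contra hc
    push_neg at hc
    have hdiffsub : Differentiable ℝ (fun s => f s - F x₁ * s) :=
      Differentiable.sub (fun s => (hfF s).differentiableAt)
        ((differentiable_const _).mul differentiable_id)
    have hgr : ∀ t ≥ x₁, f x₁ + F x₁ * (t - x₁) ≤ f t := by
      intro t ht
      have hmono : MonotoneOn (fun s => f s - F x₁ * s) (Ici x₁) := by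
        apply monotoneOn_of_deriv_nonneg (convex_Ici x₁) hdiffsub.continuous.continuousOn
          hdiffsub.differentiableOn
        intro s hs
        rw [interior_Ici, mem_Ioi] at hs
        have hds : HasDerivAt (fun s => f s - F x₁ * s) (F s - F x₁ * 1) s :=
          (hfF s).sub ((hasDerivAt_id s).const_mul (F x₁))
        rw [hds.deriv]
        have : F x₁ ≤ F s := hFmono (mem_Ici.mpr hx₁)
          (mem_Ici.mpr (le_trans hx₁ hs.le)) hs.le
        linarith
      have h2 := hmono self_mem_Ici (mem_Ici.mpr ht) ht
      simp only at h2
      linarith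
    set t := x₁ + (C ^ 2 - f x₁ + 1) / F x₁ with htdef
    have hfx₁ := hfbd x₁ hx₁
    have hpos : 0 < (C ^ 2 - f x₁ + 1) / F x₁ := by
      apply div_pos _ hc
      linarith
    have ht : t ≥ x₁ := by simp only [htdef]; linarith
    have hft : f t ≤ C ^ 2 := hfbd t (by linarith)
    have heq : F x₁ * (t - x₁) = C ^ 2 - f x₁ + 1 := by
      simp only [htdef]
      field_simp
      ring
    have := hgr t ht
    linarith
  -- FTC bound
  set g : ℝ → ℝ := fun t => 2 * t * f t + 2 * ‖deriv y t‖ ^ 2 with hgdef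
  have hfc : Continuous f := hysmooth.continuous.inner hysmooth.continuous
  have hgcont : Continuous g :=
    ((continuous_const.mul continuous_id).mul hfc).add
      (continuous_const.mul (((cD hysmooth).continuous.norm).pow 2))
  have hFDcont : Continuous fun x => 2 * ‖deriv y x‖ ^ 2 + 2 * x * f x + 4 * f x ^ 2 :=
    ((continuous_const.mul (((cD hysmooth).continuous.norm).pow 2)).add
      ((continuous_const.mul continuous_id).mul hfc)).add
      (continuous_const.mul (hfc.pow 2))
  have hgnonneg : ∀ t ≥ (0:ℝ), 0 ≤ g t := by
    intro t ht
    simp only [hgdef]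
    have := hfnonneg t
    positivity
  have hkey : ∀ T ≥ (0:ℝ), ∫ t in (0:ℝ)..T, g t ≤ -F 0 := by
    intro T hT
    have hFTC : ∫ t in (0:ℝ)..T, (2 * ‖deriv y t‖ ^ 2 + 2 * t * f t + 4 * f t ^ 2) =
        F T - F 0 :=
      intervalIntegral.integral_eq_sub_of_hasDerivAt (fun t _ => hFD t)
        (hFDcont.intervalIntegrable _ _)
    have hmono2 : ∫ t in (0:ℝ)..T, g t ≤
        ∫ t in (0:ℝ)..T, (2 * ‖deriv y t‖ ^ 2 + 2 * t * f t + 4 * f t ^ 2) := by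
      apply intervalIntegral.integral_mono_on hT (hgcont.intervalIntegrable _ _)
        (hFDcont.intervalIntegrable _ _)
      intro x _
      simp only [hgdef]
      nlinarith [sq_nonneg (f x)]
    have := hFle T hT
    linarith
  -- conclusion
  intro ε hε
  by_contra hcon
  push_neg at hcon
  set T : ℝ := max 1 (-F 0 / (4 * ε) + 2) with hTdef
  have hT1 : (1:ℝ) ≤ T := le_max_left _ _
  have hT2 : -F 0 / (4 * ε) + 2 ≤ T := le_max_right _ _
  have hglb : ∀ t ∈ Icc (1:ℝ) T, 4 * ε ≤ g t := by
    intro t ht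
    have ht1 : (1:ℝ) ≤ t := ht.1
    have hcont := hcon t ht1
    simp only [hgdef, hfnorm]
    nlinarith [sq_nonneg (‖y t‖ - ‖deriv y t‖), norm_nonneg (y t), norm_nonneg (deriv y t),
      sq_nonneg (‖y t‖ + ‖deriv y t‖)]
  have hint1 : 4 * ε * (T - 1) ≤ ∫ t in (1:ℝ)..T, g t := by
    have hconst : IntervalIntegrable (fun _ : ℝ => 4 * ε) volume 1 T :=
      intervalIntegrable_const
    have := intervalIntegral.integral_mono_on hT1 hconst (hgcont.intervalIntegrable _ _) hglb
    rwa [intervalIntegral.integral_const, smul_eq_mul, mul_comm] at this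
  have hsplit : ∫ t in (0:ℝ)..T, g t =
      (∫ t in (0:ℝ)..(1:ℝ), g t) + ∫ t in (1:ℝ)..T, g t :=
    (intervalIntegral.integral_add_adjacent_intervals (hgcont.intervalIntegrable _ _)
      (hgcont.intervalIntegrable _ _)).symm
  have h01 : 0 ≤ ∫ t in (0:ℝ)..(1:ℝ), g t := by
    apply intervalIntegral.integral_nonneg (by norm_num)
    intro u hu
    exact hgnonneg u hu.1
  have hTnn : (0:ℝ) ≤ T := by linarith
  have hB := hkey T hTnn
  have heq2 : 4 * ε * (-F 0 / (4 * ε) + 1) = -F 0 + 4 * ε := by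
    field_simp
  have hmul : -F 0 + 4 * ε ≤ 4 * ε * (T - 1) := by
    have h' := mul_le_mul_of_nonneg_left (show -F 0 / (4 * ε) + 1 ≤ T - 1 by linarith)
      (show (0:ℝ) ≤ 4 * ε by linarith)
    rw [heq2] at h'
    linarith
  linarith
lemma wronskian_zero (hysmooth : ContDiff ℝ ∞ y)
    (hode : ∀ x : ℝ, deriv (deriv y) x = x • y x + (2 * ‖y x‖ ^ 2) • y x)
    (hbdd : ∃ C : ℝ, ∀ x ≥ (0 : ℝ), ‖y x‖ ≤ C) :
    ∀ (x : ℝ) (v w : Euc m),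
      ⟪y x, v⟫ * ⟪deriv y x, w⟫ = ⟪y x, w⟫ * ⟪deriv y x, v⟫ := by
  intro x v w
  set Wf : ℝ → ℝ := fun s => ⟪y s, v⟫ * ⟪deriv y s, w⟫ - ⟪y s, w⟫ * ⟪deriv y s, v⟫ with hWdef
  suffices hsuff : Wf x = 0 by
    simp only [hWdef] at hsuff
    linarith
  have hW0 : ∀ s, HasDerivAt Wf 0 s := by
    intro s
    have h1 : HasDerivAt (fun u => ⟪y u, v⟫) (⟪y s, (0 : Euc m)⟫ + ⟪deriv y s, v⟫) s :=
      (hD hysmooth s).inner ℝ (hasDerivAt_const s v)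
    have h2 : HasDerivAt (fun u => ⟪y u, w⟫) (⟪y s, (0 : Euc m)⟫ + ⟪deriv y s, w⟫) s :=
      (hD hysmooth s).inner ℝ (hasDerivAt_const s w)
    have h3 : HasDerivAt (fun u => ⟪deriv y u, w⟫)
        (⟪deriv y s, (0 : Euc m)⟫ + ⟪deriv (deriv y) s, w⟫) s :=
      (hD (cD hysmooth) s).inner ℝ (hasDerivAt_const s w)
    have h4 : HasDerivAt (fun u => ⟪deriv y u, v⟫)
        (⟪deriv y s, (0 : Euc m)⟫ + ⟪deriv (deriv y) s, v⟫) s :=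
      (hD (cD hysmooth) s).inner ℝ (hasDerivAt_const s v)
    have hd := (h1.mul h3).sub (h2.mul h4)
    refine hd.congr_deriv ?_
    rw [hode s]
    simp only [inner_zero_right, zero_add, inner_add_left, real_inner_smul_left]
    ring
  have hconst : ∀ t : ℝ, Wf x = Wf t :=
    is_const_of_deriv_eq_zero (fun s => (hW0 s).differentiableAt) (fun s => (hW0 s).deriv) x
  by_contra hne0
  have hWpos : 0 < |Wf x| := abs_pos.mpr hne0
  set δ : ℝ := |Wf x| / (2 * (‖v‖ + 1) * (‖w‖ + 1)) with hδdef
  have hv1 : (0:ℝ) < ‖v‖ + 1 := by positivity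
  have hw1 : (0:ℝ) < ‖w‖ + 1 := by positivity
  have hδpos : 0 < δ := by positivity
  obtain ⟨t, ht1, hlt⟩ := decay hysmooth hode hbdd δ hδpos
  have hb1 : |⟪y t, v⟫ * ⟪deriv y t, w⟫| ≤ (‖y t‖ * ‖v‖) * (‖deriv y t‖ * ‖w‖) := by
    rw [abs_mul]
    exact mul_le_mul (abs_real_inner_le_norm _ _) (abs_real_inner_le_norm _ _)
      (abs_nonneg _) (by positivity)
  have hb2 : |⟪y t, w⟫ * ⟪deriv y t, v⟫| ≤ (‖y t‖ * ‖w‖) * (‖deriv y t‖ * ‖v‖) := by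
    rw [abs_mul]
    exact mul_le_mul (abs_real_inner_le_norm _ _) (abs_real_inner_le_norm _ _)
      (abs_nonneg _) (by positivity)
  have htri : |Wf t| ≤ |⟪y t, v⟫ * ⟪deriv y t, w⟫| + |⟪y t, w⟫ * ⟪deriv y t, v⟫| := by
    simp only [hWdef]
    exact abs_sub _ _
  have hbnd : |Wf t| ≤ 2 * (‖y t‖ * ‖deriv y t‖) * (‖v‖ + 1) * (‖w‖ + 1) := by
    have hyn := norm_nonneg (y t)
    have hyn' := norm_nonneg (deriv y t)
    have hvn := norm_nonneg v
    have hwn := norm_nonneg w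
    nlinarith [htri, hb1, hb2, mul_nonneg hyn hyn']
  have hWt : |Wf x| = |Wf t| := by rw [hconst t]
  have hprod : 2 * (‖y t‖ * ‖deriv y t‖) * (‖v‖ + 1) * (‖w‖ + 1) <
      2 * δ * (‖v‖ + 1) * (‖w‖ + 1) := by
    have h2p : (0:ℝ) < 2 * (‖v‖ + 1) * (‖w‖ + 1) := by positivity
    nlinarith [hlt]
  have heqδ : 2 * δ * (‖v‖ + 1) * (‖w‖ + 1) = |Wf x| := by
    simp only [hδdef]
    field_simp
  linarith [hbnd, hprod, heqδ, hWt]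

lemma colinear (hm : 1 ≤ m) (hysmooth : ContDiff ℝ ∞ y)
    (hode : ∀ x : ℝ, deriv (deriv y) x = x • y x + (2 * ‖y x‖ ^ 2) • y x)
    (hbdd : ∃ C : ℝ, ∀ x ≥ (0 : ℝ), ‖y x‖ ≤ C) :
    ∃ ν : Euc m, ‖ν‖ = 1 ∧ ∀ x : ℝ, y x = ⟪y x, ν⟫ • ν := by
  by_cases h0 : ∀ x : ℝ, y x = 0
  · refine ⟨EuclideanSpace.single ⟨0, hm⟩ (1 : ℝ), by simp [EuclideanSpace.norm_single], ?_⟩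
    intro x
    simp [h0 x]
  · push_neg at h0
    obtain ⟨x₀, hx₀⟩ := h0
    have hn0 : (0:ℝ) < ‖y x₀‖ := norm_pos_iff.mpr hx₀
    set ν : Euc m := ‖y x₀‖⁻¹ • y x₀ with hνdef
    have hν : ‖ν‖ = 1 := by
      simp only [hνdef, norm_smul, Real.norm_eq_abs, abs_of_pos (inv_pos.mpr hn0)]
      field_simp
    have hW := wronskian_zero hysmooth hode hbdd
    have hpar : ‖y x₀‖ ^ 2 • deriv y x₀ = ⟪deriv y x₀, y x₀⟫ • y x₀ := by
      have hzero : ∀ u : Euc m,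
          ⟪‖y x₀‖ ^ 2 • deriv y x₀ - ⟪deriv y x₀, y x₀⟫ • y x₀, u⟫ = 0 := by
        intro u
        have h5 := hW x₀ (y x₀) u
        rw [real_inner_self_eq_norm_sq] at h5
        simp only [inner_sub_left, real_inner_smul_left]
        linarith [h5]
      have h6 := hzero (‖y x₀‖ ^ 2 • deriv y x₀ - ⟪deriv y x₀, y x₀⟫ • y x₀)
      rw [inner_self_eq_zero] at h6
      exact sub_eq_zero.mp h6
    set wf : ℝ → Euc m := fun s => y s - ⟪y s, ν⟫ • ν with hwdef
    set Dw : ℝ → Euc m := fun s => deriv y s - ⟪deriv y s, ν⟫ • ν with hDwdef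
    have hwd : ∀ s, HasDerivAt wf (Dw s) s := by
      intro s
      have h1 : HasDerivAt (fun u => ⟪y u, ν⟫) (⟪y s, (0 : Euc m)⟫ + ⟪deriv y s, ν⟫) s :=
        (hD hysmooth s).inner ℝ (hasDerivAt_const s ν)
      have h3 := (hD hysmooth s).sub (h1.smul_const ν)
      exact h3.congr_deriv (by simp [hDwdef])
    have hDwd : ∀ s, HasDerivAt Dw ((s + 2 * ‖y s‖ ^ 2) • wf s) s := by
      intro s
      have h1 : HasDerivAt (fun u => ⟪deriv y u, ν⟫)
          (⟪deriv y s, (0 : Euc m)⟫ + ⟪deriv (deriv y) s, ν⟫) s :=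
        (hD (cD hysmooth) s).inner ℝ (hasDerivAt_const s ν)
      have h3 := (hD (cD hysmooth) s).sub (h1.smul_const ν)
      have heq : deriv (deriv y) s - (⟪deriv y s, (0 : Euc m)⟫ + ⟪deriv (deriv y) s, ν⟫) • ν
          = (s + 2 * ‖y s‖ ^ 2) • wf s := by
        rw [hode s]
        simp only [inner_zero_right, zero_add, inner_add_left, real_inner_smul_left, hwdef]
        module
      rw [heq] at h3
      exact h3
    have hin : ⟪y x₀, ν⟫ = ‖y x₀‖ := by
      rw [hνdef, real_inner_smul_right, real_inner_self_eq_norm_sq, pow_two,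
        inv_mul_cancel_left₀ hn0.ne']
    have hw0 : wf x₀ = 0 := by
      simp only [hwdef]
      rw [hin, hνdef, smul_smul, mul_inv_cancel₀ hn0.ne', one_smul, sub_self]
    have h2 : deriv y x₀ = ((‖y x₀‖ ^ 2)⁻¹ * ⟪deriv y x₀, y x₀⟫) • y x₀ := by
      have h2 := congrArg (fun z => (‖y x₀‖ ^ 2)⁻¹ • z) hpar
      simp only [smul_smul] at h2
      rwa [inv_mul_cancel₀ (by positivity), one_smul] at h2
    have hyx0 : y x₀ = ⟪y x₀, ν⟫ • ν := by
      have h9 : y x₀ - ⟪y x₀, ν⟫ • ν = 0 := by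
        have := hw0
        simp only [hwdef] at this
        exact this
      exact sub_eq_zero.mp h9
    have hνν : ⟪ν, ν⟫ = (1:ℝ) := by
      rw [real_inner_self_eq_norm_sq, hν, one_pow]
    have hDw0 : Dw x₀ = 0 := by
      simp only [hDwdef]
      rw [h2, hyx0]
      simp only [real_inner_smul_left, real_inner_smul_right, smul_smul, hνν, mul_one]
      module
    have hvanish : ∀ b : ℝ, x₀ ≤ b → ∀ t ∈ Icc x₀ b, wf t = 0 := by
      intro b hb
      set P : ℝ → Euc m × Euc m := fun s => (wf s, Dw s) with hPdef
      have hP : ∀ s, HasDerivAt P (Dw s, (s + 2 * ‖y s‖ ^ 2) • wf s) s := fun s =>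
        (hwd s).prodMk (hDwd s)
      have hcont2 : Continuous fun s : ℝ => s + 2 * ‖y s‖ ^ 2 :=
        continuous_id.add (continuous_const.mul (hysmooth.continuous.norm.pow 2))
      obtain ⟨K₀, hK₀⟩ := (isCompact_Icc (a := x₀) (b := b)).exists_bound_of_continuousOn
        hcont2.continuousOn
      set K : ℝ := max 1 K₀ with hKdef
      have hK1 : (1:ℝ) ≤ K := le_max_left _ _
      have hbound : ∀ s ∈ Ico x₀ b, ‖(Dw s, (s + 2 * ‖y s‖ ^ 2) • wf s)‖ ≤ K * ‖P s‖ + 0 := by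
        intro s hs
        rw [add_zero, Prod.norm_def, Prod.norm_def]
        simp only [norm_smul, Real.norm_eq_abs]
        have hKs : |s + 2 * ‖y s‖ ^ 2| ≤ K :=
          le_trans (hK₀ s ⟨hs.1, hs.2.le⟩) (le_max_right _ _)
        apply max_le
        · calc ‖Dw s‖ ≤ max ‖wf s‖ ‖Dw s‖ := le_max_right _ _
            _ ≤ K * max ‖wf s‖ ‖Dw s‖ :=
              le_mul_of_one_le_left (le_max_of_le_left (norm_nonneg _)) hK1
        · calc |s + 2 * ‖y s‖ ^ 2| * ‖wf s‖ ≤ K * ‖wf s‖ :=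
              mul_le_mul_of_nonneg_right hKs (norm_nonneg _)
            _ ≤ K * max ‖wf s‖ ‖Dw s‖ :=
              mul_le_mul_of_nonneg_left (le_max_left _ _) (by linarith)
      have hgron := norm_le_gronwallBound_of_norm_deriv_right_le
        (f := P) (f' := fun s => (Dw s, (s + 2 * ‖y s‖ ^ 2) • wf s)) (δ := 0) (K := K) (ε := 0)
        (a := x₀) (b := b)
        (fun s _ => ((hP s).continuousAt).continuousWithinAt)
        (fun s _ => (hP s).hasDerivWithinAt)
        (by simp [hPdef, hw0, hDw0, Prod.norm_def])
        hbound
      intro t ht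
      have h7 := hgron t ht
      rw [gronwallBound_ε0, zero_mul] at h7
      have hP0 : P t = 0 := by rwa [norm_le_zero_iff] at h7
      have h8 := congrArg Prod.fst hP0
      simpa [hPdef] using h8
    have hvanishneg : ∀ t : ℝ, t ≤ x₀ → wf t = 0 := by
      intro t₁ ht₁
      set b : ℝ := 2 * x₀ - t₁ with hbdef
      have hb : x₀ ≤ b := by simp only [hbdef]; linarith
      set Q : ℝ → Euc m × Euc m := fun s => (wf (2 * x₀ - s), Dw (2 * x₀ - s)) with hQdef
      have hQ : ∀ s, HasDerivAt Q
          ((-1 : ℝ) • (Dw (2 * x₀ - s),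
            ((2 * x₀ - s) + 2 * ‖y (2 * x₀ - s)‖ ^ 2) • wf (2 * x₀ - s))) s := by
        intro s
        have hinner : HasDerivAt (fun u : ℝ => 2 * x₀ - u) (-1) s := by
          exact ((hasDerivAt_const s (2 * x₀)).sub (hasDerivAt_id s)).congr_deriv (by norm_num)
        exact ((hwd (2 * x₀ - s)).prodMk (hDwd (2 * x₀ - s))).scomp s hinner
      have hcont2 : Continuous fun s : ℝ => (2 * x₀ - s) + 2 * ‖y (2 * x₀ - s)‖ ^ 2 := by
        have hcs : Continuous fun s : ℝ => 2 * x₀ - s :=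
          continuous_const.sub continuous_id
        exact hcs.add (continuous_const.mul
          (((hysmooth.continuous.comp hcs).norm.pow 2)))
      obtain ⟨K₀, hK₀⟩ := (isCompact_Icc (a := x₀) (b := b)).exists_bound_of_continuousOn
        hcont2.continuousOn
      set K : ℝ := max 1 K₀ with hKdef
      have hK1 : (1:ℝ) ≤ K := le_max_left _ _
      have hbound : ∀ s ∈ Ico x₀ b,
          ‖(-1 : ℝ) • (Dw (2 * x₀ - s),
            ((2 * x₀ - s) + 2 * ‖y (2 * x₀ - s)‖ ^ 2) • wf (2 * x₀ - s))‖ ≤ K * ‖Q s‖ + 0 := by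
        intro s hs
        rw [add_zero, norm_smul]
        simp only [Real.norm_eq_abs, abs_neg, abs_one, one_mul]
        rw [Prod.norm_def, Prod.norm_def]
        simp only [norm_smul, Real.norm_eq_abs]
        have hKs : |(2 * x₀ - s) + 2 * ‖y (2 * x₀ - s)‖ ^ 2| ≤ K :=
          le_trans (hK₀ s ⟨hs.1, hs.2.le⟩) (le_max_right _ _)
        apply max_le
        · calc ‖Dw (2 * x₀ - s)‖ ≤ max ‖wf (2 * x₀ - s)‖ ‖Dw (2 * x₀ - s)‖ := le_max_right _ _
            _ ≤ K * max ‖wf (2 * x₀ - s)‖ ‖Dw (2 * x₀ - s)‖ :=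
              le_mul_of_one_le_left (le_max_of_le_left (norm_nonneg _)) hK1
        · calc |(2 * x₀ - s) + 2 * ‖y (2 * x₀ - s)‖ ^ 2| * ‖wf (2 * x₀ - s)‖ ≤
              K * ‖wf (2 * x₀ - s)‖ := mul_le_mul_of_nonneg_right hKs (norm_nonneg _)
            _ ≤ K * max ‖wf (2 * x₀ - s)‖ ‖Dw (2 * x₀ - s)‖ :=
              mul_le_mul_of_nonneg_left (le_max_left _ _) (by linarith)
      have hgron := norm_le_gronwallBound_of_norm_deriv_right_le
        (f := Q) (δ := 0) (K := K) (ε := 0) (a := x₀) (b := b)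
        (fun s _ => ((hQ s).continuousAt).continuousWithinAt)
        (fun s _ => (hQ s).hasDerivWithinAt)
        (by simp [hQdef, show 2 * x₀ - x₀ = x₀ by ring, hw0, hDw0, Prod.norm_def])
        hbound
      have h7 := hgron b ⟨hb, le_refl b⟩
      rw [gronwallBound_ε0, zero_mul] at h7
      have hQ0 : Q b = 0 := by rwa [norm_le_zero_iff] at h7
      have h8 := congrArg Prod.fst hQ0
      have hbt : 2 * x₀ - b = t₁ := by simp only [hbdef]; ring
      simpa [hQdef, hbt] using h8
    refine ⟨ν, hν, ?_⟩
    intro x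
    have hwx : wf x = 0 := by
      rcases le_total x₀ x with hcase | hcase
      · exact hvanish x hcase x ⟨hcase, le_refl x⟩
      · exact hvanishneg x hcase
    simp only [hwdef] at hwx
    exact sub_eq_zero.mp hwx
end Fwd

lemma transfer {m : ℕ} {y : ℝ → Euc m} {g : ℝ → ℝ} {ν : Euc m} (hν : ‖ν‖ = 1)
    (hgsm : ContDiff ℝ ∞ g) (hyg : y = fun x => g x • ν) (hmin : IsMinimal1 y) :
    IsMinimal1 g := by
  intro φ hφ hφc
  have hν0 : ν ≠ 0 := by
    intro hz
    rw [hz, norm_zero] at hν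
    norm_num at hν
  set Φ : ℝ → Euc m := fun x => φ x • ν with hΦdef
  have hΦsm : ContDiff ℝ ∞ Φ := hφ.smul contDiff_const
  have hsupps : support Φ = support φ := by
    ext t
    simp [hΦdef, Function.mem_support, smul_eq_zero, hν0]
  have hsupp : tsupport Φ = tsupport φ := by
    unfold tsupport
    rw [hsupps]
  have hΦc : HasCompactSupport Φ := hφc.mono (by rw [hsupps])
  have hEy : EP1 y (tsupport φ) = EP1 g (tsupport φ) := by
    unfold EP1
    congr 1
    funext x
    have hd : deriv y x = deriv g x • ν := by
      rw [hyg]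
      exact ((hD hgsm x).smul_const ν).deriv
    rw [hd, hyg]
    simp [norm_smul, hν, Real.norm_eq_abs]
  have hEyΦ : EP1 (y + Φ) (tsupport φ) = EP1 (g + φ) (tsupport φ) := by
    have hfun : y + Φ = fun x => (g + φ) x • ν := by
      funext x
      simp [hyg, hΦdef, add_smul]
    unfold EP1
    congr 1
    funext x
    have hd : deriv (y + Φ) x = deriv (g + φ) x • ν := by
      rw [hfun]
      exact ((hD (hgsm.add hφ) x).smul_const ν).deriv
    rw [hd, hfun]
    simp [norm_smul, hν, Real.norm_eq_abs]
  have hkey := hmin Φ hΦsm hΦc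
  rw [hsupp] at hkey
  rw [hEy, hEyΦ] at hkey
  exact hkey

end S6

/-- A smooth solution `y : ℝ → ℝᵐ` of the one-dimensional extended
Painlevé system `y'' = x y + 2|y|² y` which is bounded on `[0, ∞)` is minimal if and
only if `y = h(·) ν` for some unit vector `ν ∈ ℝᵐ`. -/
theorem statement6 {m : ℕ} (hm : 1 ≤ m) (h : ℝ → ℝ) (hHM : IsHastingsMcLeod h)
    (hminh : HMMinimal h) (huniq : HMUnique h)
    (y : ℝ → Euc m) (hysmooth : ContDiff ℝ ∞ y)
    (hode : ∀ x : ℝ, deriv (deriv y) x = x • y x + (2 * ‖y x‖ ^ 2) • y x)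
    (hbdd : ∃ C : ℝ, ∀ x ≥ (0 : ℝ), ‖y x‖ ≤ C) :
    IsMinimal1 y ↔ ∃ ν : Euc m, ‖ν‖ = 1 ∧ ∀ x : ℝ, y x = h x • ν := by
  constructor
  · intro hmin
    obtain ⟨ν, hν, hyν⟩ := S6.colinear hm hysmooth hode hbdd
    set g : ℝ → ℝ := fun x => ⟪y x, ν⟫ with hgdef
    have hyg : y = fun x => g x • ν := funext hyν
    have hgsm : ContDiff ℝ ∞ g := hysmooth.inner ℝ contDiff_const
    have hnorm2 : ∀ x, ‖y x‖ ^ 2 = g x ^ 2 := by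
      intro x
      rw [hyν x]
      rw [norm_smul, Real.norm_eq_abs, hν, mul_one, sq_abs]
    have hgd : ∀ x, deriv g x = ⟪deriv y x, ν⟫ := by
      intro x
      have h1 := ((S6.hD hysmooth x).inner ℝ (hasDerivAt_const x ν)).deriv
      simpa using h1
    have hgode : ∀ x : ℝ, deriv (deriv g) x = x * g x + 2 * g x ^ 3 := by
      intro x
      have hfun : deriv g = fun x => ⟪deriv y x, ν⟫ := funext hgd
      rw [hfun]
      have h2 := ((S6.hD (S6.cD hysmooth) x).inner ℝ (hasDerivAt_const x ν)).deriv
      rw [h2, hode x]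
      simp only [inner_zero_right, zero_add, inner_add_left, real_inner_smul_left, hnorm2 x]
      ring
    have hgbdd : ∃ C : ℝ, ∀ x ≥ (0:ℝ), |g x| ≤ C := by
      obtain ⟨C, hC⟩ := hbdd
      refine ⟨C, fun x hx => ?_⟩
      have h1 := abs_real_inner_le_norm (y x) ν
      rw [hν, mul_one] at h1
      exact h1.trans (hC x hx)
    have hgmin : IsMinimal1 g := S6.transfer hν hgsm hyg hmin
    rcases huniq g hgsm hgode hgmin hgbdd with hgh | hgh
    · exact ⟨ν, hν, fun x => by
        rw [hyν x, show (⟪y x, ν⟫ : ℝ) = h x from congrFun hgh x]⟩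
    · refine ⟨-ν, by rw [norm_neg, hν], fun x => ?_⟩
      rw [hyν x, show (⟪y x, ν⟫ : ℝ) = -h x from congrFun hgh x]
      simp
  · rintro ⟨ν, hν, hyν⟩
    have hyg : y = fun x => h x • ν := funext hyν
    rw [hyg]
    exact S6.backward hHM.smooth hHM.ode hHM.pos hν
end
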